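/- arXiv:2510.01873 — 8 statements merged into one kernel-verified Lean document; each statement's English description precedes it below -/
import Mathlib

section
/- Let X be a Tychonoff (completely regular Hausdorff) space, let D ⊆ C_k(X) be an open convex set, let φ : D → ℝ be a convex continuous function, and let f ∈ D. Then φ is Schwartz–Fréchet differentiable at f (there exist a continuous linear functional ξ on C_k(X) and a neighborhood V of 0 in C_k(X) such that sup_{h∈V}(φ(f+th) − φ(f) − tξ(h)) = o(t) as t → 0) if and only if φ is Yamamuro–Fréchet differentiable at f (there exists a continuous linear functional ξ on C_k(X) such that for every von Neumann bounded set M ⊆ C_k(X), sup_{h∈M}(φ(f+th) − φ(f) − tξ(h)) = o(t) as t → 0). -/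
/-!
A von Neumann bounded set is absorbed by every neighbourhood of `0`, so a remainder estimate that
is uniform on a neighbourhood transfers to bounded sets by rescaling `t`.

Conversely, `φ` is bounded above near `f`, so there is a compact `K₀` with `φ` bounded above on
`f + {w : |w| < ε on K₀}`. A convex function bounded above on a line is constant on it, hence
`φ (f + t • h)` does not change when `h` is modified away from `K₀`; likewise `ξ h` only depends
on `h` near some compact `K₁`. On the neighbourhood `{h : |h| < c on K₀ ∪ K₁}` we may therefore
replace `h` by its truncation at level `c`, and the uniformly bounded truncations form a von
Neumann bounded set.
-/

open Filter Topology Pointwise Set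

/-- A one-sided bound: the remainder is bounded above by `o(t)`, not in absolute value. -/
def RemainderIsLittleOOn {E : Type*} [AddCommGroup E] [Module ℝ E] [TopologicalSpace E]
    (φ : E → ℝ) (f : E) (ξ : E →L[ℝ] ℝ) (S : Set E) : Prop :=
  ∀ ε > (0 : ℝ), ∃ δ > (0 : ℝ), ∀ t : ℝ, |t| < δ →
    ∀ h ∈ S, φ (f + t • h) - φ f - t * ξ h ≤ ε * |t|

namespace RemainderIsLittleOOn

variable {E : Type*} [AddCommGroup E] [Module ℝ E] [TopologicalSpace E]
  {φ : E → ℝ} {f : E} {ξ : E →L[ℝ] ℝ} {S T : Set E}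

theorem mono (hS : RemainderIsLittleOOn φ f ξ S) (hTS : T ⊆ S) :
    RemainderIsLittleOOn φ f ξ T :=
  fun ε hε ↦ (hS ε hε).imp fun _ ⟨hδ, hle⟩ ↦ ⟨hδ, fun t ht h hh ↦ hle t ht h (hTS hh)⟩

theorem smul_set (hS : RemainderIsLittleOOn φ f ξ S) {a : ℝ} (ha : a ≠ 0) :
    RemainderIsLittleOOn φ f ξ (a • S) := by
  have ha' : 0 < |a| := abs_pos.2 ha
  intro ε hε
  obtain ⟨δ, hδ, hle⟩ := hS (ε / |a|) (div_pos hε ha')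
  refine ⟨δ / |a|, div_pos hδ ha', ?_⟩
  rintro t ht _ ⟨h, hh, rfl⟩
  have hta : |t * a| < δ := by rwa [abs_mul, ← lt_div_iff₀ ha']
  calc φ (f + t • a • h) - φ f - t * ξ (a • h)
      = φ (f + (t * a) • h) - φ f - (t * a) * ξ h := by
        rw [smul_smul, map_smul, smul_eq_mul, mul_assoc]
    _ ≤ ε / |a| * |t * a| := hle _ hta h hh
    _ = ε * |t| := by rw [abs_mul]; field_simp

theorem of_mem_nhds {V M : Set E} (hV : V ∈ 𝓝 0) (hVrem : RemainderIsLittleOOn φ f ξ V)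
    (hM : Bornology.IsVonNBounded ℝ M) : RemainderIsLittleOOn φ f ξ M := by
  obtain ⟨r, hr, hMV⟩ := (hM hV).exists_pos
  exact (hVrem.smul_set hr.ne').mono (hMV r (by rw [Real.norm_of_nonneg hr.le]))

theorem of_forall_exists {B V : Set E} (hB : RemainderIsLittleOOn φ f ξ B)
    (hV : ∀ h ∈ V, ∃ h₁ ∈ B, ξ h = ξ h₁ ∧ ∀ t : ℝ, |t| < 1 → φ (f + t • h) = φ (f + t • h₁)) :
    RemainderIsLittleOOn φ f ξ V := by
  intro ε hε
  obtain ⟨δ, hδ, hle⟩ := hB ε hε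
  refine ⟨min δ 1, lt_min hδ one_pos, fun t ht h hh ↦ ?_⟩
  obtain ⟨h₁, hh₁, hξ, hφ⟩ := hV h hh
  rw [hξ, hφ t (ht.trans_le (min_le_right _ _))]
  exact hle t (ht.trans_le (min_le_left _ _)) h₁ hh₁

end RemainderIsLittleOOn

theorem ConvexOn.le_of_bddAbove_univ {g : ℝ → ℝ} (hg : ConvexOn ℝ univ g)
    (hbdd : BddAbove (range g)) (r s : ℝ) : g s ≤ g r := by
  obtain ⟨M, hM⟩ := hbdd
  have hle : ∀ l ∈ Ioo (0 : ℝ) 1, g s ≤ g r + l * (M - g r) := by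
    rintro l ⟨hl0, hl1⟩
    have hs : (1 - l) • r + l • (r + (s - r) / l) = s := by
      simp only [smul_eq_mul]; field_simp; ring
    have := hg.2 (mem_univ r) (mem_univ (r + (s - r) / l)) (show 0 ≤ 1 - l by linarith) hl0.le
      (by ring)
    rw [hs, smul_eq_mul, smul_eq_mul] at this
    nlinarith [hM (mem_range_self (r + (s - r) / l))]
  have hlim : Tendsto (fun l : ℝ ↦ g r + l * (M - g r)) (𝓝[>] 0) (𝓝 (g r)) := by
    refine tendsto_nhdsWithin_of_tendsto_nhds ?_
    exact (by fun_prop : Continuous fun l : ℝ ↦ g r + l * (M - g r)).tendsto' 0 _ (by simp)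
  exact ge_of_tendsto hlim (eventually_of_mem (Ioo_mem_nhdsGT one_pos) hle)

theorem ConvexOn.apply_add_eq_of_bddAbove {E : Type*} [AddCommGroup E] [Module ℝ E]
    {D : Set E} {φ : E → ℝ} (hφ : ConvexOn ℝ D φ) {u v : E} (hline : ∀ s : ℝ, u + s • v ∈ D)
    (hbdd : BddAbove (range fun s : ℝ ↦ φ (u + s • v))) : φ (u + v) = φ u := by
  let L : ℝ →ᵃ[ℝ] E := AffineMap.lineMap u (u + v)
  have hL : ∀ s : ℝ, L s = u + s • v := fun s ↦ by
    simp [L, AffineMap.lineMap_apply, add_comm]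
  have hconv : ConvexOn ℝ univ (φ ∘ L) := by
    have := hφ.comp_affineMap L
    rwa [show L ⁻¹' D = univ from eq_univ_of_forall fun s ↦ by simp [hL, hline]] at this
  have hbdd' : BddAbove (range (φ ∘ L)) := by
    simpa [Function.comp_def, hL] using hbdd
  have h1 := hconv.le_of_bddAbove_univ hbdd' 0 1
  have h2 := hconv.le_of_bddAbove_univ hbdd' 1 0
  simpa [hL] using le_antisymm h1 h2

namespace ContinuousMap

variable {X : Type*} [TopologicalSpace X]

theorem hasBasis_nhds_zero_real :
    (𝓝 (0 : C(X, ℝ))).HasBasis (fun p : Set X × ℝ ↦ IsCompact p.1 ∧ 0 < p.2)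
      (fun p ↦ {g | ∀ x ∈ p.1, |g x| < p.2}) := by
  convert nhds_basis_uniformity'
    ((Metric.uniformity_basis_dist (α := ℝ)).compactConvergenceUniformity (α := X))
    (x := (0 : C(X, ℝ))) using 2 with p
  ext g
  simp [UniformSpace.ball, Real.dist_eq]

theorem isVonNBounded_setOf_forall_abs_le (c : ℝ) :
    Bornology.IsVonNBounded ℝ {g : C(X, ℝ) | ∀ x, |g x| ≤ c} := by
  refine hasBasis_nhds_zero_real.isVonNBounded_iff.2 fun ⟨K, ε⟩ ⟨_, hε⟩ ↦ ?_
  rw [absorbs_iff_eventually_nhds_zero (by simpa using fun _ _ ↦ hε)]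
  have hsmall : ∀ᶠ a : ℝ in 𝓝 0, |a| * c < ε := by
    have : Tendsto (fun a : ℝ ↦ |a| * c) (𝓝 0) (𝓝 0) :=
      (by fun_prop : Continuous fun a : ℝ ↦ |a| * c).tendsto' 0 0 (by simp)
    exact this.eventually (eventually_lt_nhds hε)
  filter_upwards [hsmall] with a ha g hg x _
  calc |(a • g) x| = |a| * |g x| := by simp [abs_mul]
    _ ≤ |a| * c := mul_le_mul_of_nonneg_left (hg x) (abs_nonneg a)
    _ < ε := ha

theorem exists_add_abs_le_eqOn_zero {K : Set X} {c : ℝ} (hc : 0 ≤ c) (h : C(X, ℝ))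
    (hK : ∀ x ∈ K, |h x| ≤ c) :
    ∃ h₁ h₂ : C(X, ℝ), h = h₁ + h₂ ∧ (∀ x, |h₁ x| ≤ c) ∧ ∀ x ∈ K, h₂ x = 0 := by
  let h₁ : C(X, ℝ) := ⟨fun x ↦ max (-c) (min c (h x)), by fun_prop⟩
  refine ⟨h₁, h - h₁, by abel, fun x ↦ ?_, fun x hx ↦ ?_⟩
  · exact abs_le.2 ⟨le_max_left _ _, max_le (by linarith) (min_le_left _ _)⟩
  · obtain ⟨hlo, hhi⟩ := abs_le.1 (hK x hx)
    simp [h₁, min_eq_right hhi, max_eq_right hlo]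

end ContinuousMap

theorem ContinuousLinearMap.exists_isCompact_forall_eqOn_zero {X F : Type*} [TopologicalSpace X]
    [NormedAddCommGroup F] [NormedSpace ℝ F] (ξ : C(X, ℝ) →L[ℝ] F) :
    ∃ K : Set X, IsCompact K ∧ ∀ g : C(X, ℝ), (∀ x ∈ K, g x = 0) → ξ g = 0 := by
  have hW : ξ ⁻¹' Metric.ball 0 1 ∈ 𝓝 0 :=
    ξ.continuous.continuousAt.preimage_mem_nhds (by simpa using Metric.ball_mem_nhds 0 one_pos)
  obtain ⟨⟨K, ε⟩, ⟨hK, hε⟩, hsub⟩ := ContinuousMap.hasBasis_nhds_zero_real.mem_iff.1 hW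
  refine ⟨K, hK, fun g hg ↦ ?_⟩
  by_contra hne
  have hmem := @hsub (‖ξ g‖⁻¹ • g) fun x hx ↦ by simp [hg x hx, hε]
  simp [norm_smul, hne] at hmem

theorem ConvexOn.apply_add_eq_of_eqOn_zero {X : Type*} [TopologicalSpace X]
    {D : Set C(X, ℝ)} {φ : C(X, ℝ) → ℝ} (hφ : ConvexOn ℝ D φ) {f : C(X, ℝ)} {K : Set X}
    {ε M : ℝ} (hK : ∀ w : C(X, ℝ), (∀ x ∈ K, |w x| < ε) → f + w ∈ D ∧ φ (f + w) ≤ M)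
    {u v : C(X, ℝ)} (hu : ∀ x ∈ K, |u x| < ε) (hv : ∀ x ∈ K, v x = 0) :
    φ (f + u + v) = φ (f + u) := by
  have hline (s : ℝ) : ∀ x ∈ K, |(u + s • v) x| < ε := fun x hx ↦ by
    simpa [hv x hx] using hu x hx
  refine hφ.apply_add_eq_of_bddAbove (fun s ↦ ?_) ⟨M, ?_⟩
  · rw [add_assoc]
    exact (hK _ (hline s)).1
  · rintro _ ⟨s, rfl⟩
    simp only [add_assoc]
    exact (hK _ (hline s)).2

theorem ConvexOn.exists_nhds_forall_exists_abs_le {X : Type*} [TopologicalSpace X]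
    {D : Set C(X, ℝ)} (hD : IsOpen D) {φ : C(X, ℝ) → ℝ} (hφ : ConvexOn ℝ D φ)
    (hφc : ContinuousOn φ D) {f : C(X, ℝ)} (hf : f ∈ D) (ξ : C(X, ℝ) →L[ℝ] ℝ) :
    ∃ c : ℝ, ∃ V ∈ 𝓝 (0 : C(X, ℝ)), ∀ h ∈ V, ∃ h₁ ∈ {g : C(X, ℝ) | ∀ x, |g x| ≤ c},
      ξ h = ξ h₁ ∧ ∀ t : ℝ, |t| < 1 → φ (f + t • h) = φ (f + t • h₁) := by
  have hU : {w | f + w ∈ D ∧ φ (f + w) < φ f + 1} ∈ 𝓝 (0 : C(X, ℝ)) := by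
    have hfD := hD.mem_nhds hf
    have : D ∩ {u | φ u < φ f + 1} ∈ 𝓝 f :=
      inter_mem hfD (hφc.continuousAt hfD (Iio_mem_nhds (lt_add_one _)))
    exact (continuous_const_add f).tendsto' 0 f (add_zero f) this
  obtain ⟨⟨K₀, ε⟩, ⟨hK₀, hε⟩, hsub⟩ := ContinuousMap.hasBasis_nhds_zero_real.mem_iff.1 hU
  obtain ⟨K₁, hK₁, hξ⟩ := ξ.exists_isCompact_forall_eqOn_zero
  refine ⟨ε / 2, _, ContinuousMap.hasBasis_nhds_zero_real.mem_of_mem (i := (K₀ ∪ K₁, ε / 2))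
    ⟨hK₀.union hK₁, half_pos hε⟩, fun h hh ↦ ?_⟩
  obtain ⟨h₁, h₂, rfl, hh₁, hh₂⟩ :=
    ContinuousMap.exists_add_abs_le_eqOn_zero (half_pos hε).le h fun x hx ↦ (hh x hx).le
  refine ⟨h₁, hh₁, by rw [map_add, hξ h₂ fun x hx ↦ hh₂ x (.inr hx), add_zero], fun t ht ↦ ?_⟩
  rw [smul_add, ← add_assoc]
  refine hφ.apply_add_eq_of_eqOn_zero (fun w hw ↦ ⟨(hsub hw).1, (hsub hw).2.le⟩)
    (fun x _ ↦ ?_) (fun x hx ↦ by simp [hh₂ x (.inl hx)])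
  calc |(t • h₁) x| = |t| * |h₁ x| := by simp [abs_mul]
    _ ≤ 1 * (ε / 2) := mul_le_mul ht.le (hh₁ x) (abs_nonneg _) zero_le_one
    _ < ε := by linarith

theorem stmt2_general {X : Type*} [TopologicalSpace X]
    (D : Set C(X, ℝ)) (hDopen : IsOpen D)
    (φ : C(X, ℝ) → ℝ) (hφconv : ConvexOn ℝ D φ) (hφcont : ContinuousOn φ D)
    (f : C(X, ℝ)) (hf : f ∈ D) :
    (∃ ξ : C(X, ℝ) →L[ℝ] ℝ, ∃ V ∈ nhds (0 : C(X, ℝ)),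
        ∀ ε > (0 : ℝ), ∃ δ > (0 : ℝ), ∀ t : ℝ, |t| < δ →
          ∀ h ∈ V, φ (f + t • h) - φ f - t * ξ h ≤ ε * |t|) ↔
    (∃ ξ : C(X, ℝ) →L[ℝ] ℝ, ∀ M : Set C(X, ℝ), Bornology.IsVonNBounded ℝ M →
        ∀ ε > (0 : ℝ), ∃ δ > (0 : ℝ), ∀ t : ℝ, |t| < δ →
          ∀ h ∈ M, φ (f + t • h) - φ f - t * ξ h ≤ ε * |t|) := by
  constructor
  · rintro ⟨ξ, V, hV, hVrem⟩
    exact ⟨ξ, fun M hM ↦ RemainderIsLittleOOn.of_mem_nhds hV hVrem hM⟩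
  · rintro ⟨ξ, hbdd⟩
    obtain ⟨c, V, hV, hred⟩ := hφconv.exists_nhds_forall_exists_abs_le hDopen hφcont hf ξ
    have hB : RemainderIsLittleOOn φ f ξ {g : C(X, ℝ) | ∀ x, |g x| ≤ c} :=
      hbdd _ (ContinuousMap.isVonNBounded_setOf_forall_abs_le c)
    exact ⟨ξ, V, hV, hB.of_forall_exists hred⟩

/-- For a Tychonoff space `X`, an open convex `D ⊆ C_k(X)`,
a convex continuous `φ : D → ℝ` and `f ∈ D`: `φ` is Schwartz–Fréchet differentiable
at `f` (there are a continuous linear functional `ξ` and a neighbourhood `V` of `0`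
with `sup_{h∈V}(φ(f+th) − φ(f) − tξ(h)) = o(t)` as `t → 0`) if and only if `φ` is
Yamamuro–Fréchet differentiable at `f` (there is a continuous linear functional `ξ`
such that for every von Neumann bounded `M ⊆ C_k(X)`,
`sup_{h∈M}(φ(f+th) − φ(f) − tξ(h)) = o(t)` as `t → 0`). -/
theorem stmt2 {X : Type*} [TopologicalSpace X] [T35Space X]
    (D : Set C(X, ℝ)) (hDopen : IsOpen D) (hDconv : Convex ℝ D)
    (φ : C(X, ℝ) → ℝ) (hφconv : ConvexOn ℝ D φ) (hφcont : ContinuousOn φ D)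
    (f : C(X, ℝ)) (hf : f ∈ D) :
    (∃ ξ : C(X, ℝ) →L[ℝ] ℝ, ∃ V ∈ nhds (0 : C(X, ℝ)),
        ∀ ε > (0 : ℝ), ∃ δ > (0 : ℝ), ∀ t : ℝ, |t| < δ →
          ∀ h ∈ V, φ (f + t • h) - φ f - t * ξ h ≤ ε * |t|) ↔
    (∃ ξ : C(X, ℝ) →L[ℝ] ℝ, ∀ M : Set C(X, ℝ), Bornology.IsVonNBounded ℝ M →
        ∀ ε > (0 : ℝ), ∃ δ > (0 : ℝ), ∀ t : ℝ, |t| < δ →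
          ∀ h ∈ M, φ (f + t • h) - φ f - t * ξ h ≤ ε * |t|) :=
  stmt2_general D hDopen φ hφconv hφcont f hf
end

section
/- Let X be a Tychonoff (completely regular Hausdorff) space, let D ⊆ C_k(X) be an open convex set, let φ : D → ℝ be a convex function, let f ∈ D, let K ⊆ X be compact, and let γ > 0 be such that f + V_K^γ ⊆ D and sup φ[f + V_K^γ] < ∞, where V_K^γ = {h ∈ C_k(X) : h(K) ⊆ (−γ, γ)}. If f' ∈ C_k(X) satisfies f'|_K = f|_K, then f' ∈ D and φ(f') = φ(f). -/
/-- A convex function on `ℝ` bounded above is monotone-comparable: `h a ≤ h b` for all `a b`. -/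
lemma convex_bddAbove_le {h : ℝ → ℝ} (hc : ConvexOn ℝ Set.univ h) {M : ℝ}
    (hM : ∀ t, h t ≤ M) (a b : ℝ) : h a ≤ h b := by
  by_contra hlt
  push_neg at hlt
  set s : ℝ := max 1 ((M - h b) / (h a - h b) + 1) with hs
  have hs1 : (1 : ℝ) ≤ s := le_max_left _ _
  have hs0 : (0 : ℝ) < s := lt_of_lt_of_le one_pos hs1
  have hinv0 : (0 : ℝ) ≤ 1 / s := by positivity
  have hinv1 : 1 / s ≤ 1 := by
    rw [div_le_one hs0]; exact hs1
  have key := hc.2 (Set.mem_univ (b + s * (a - b))) (Set.mem_univ b) hinv0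
    (sub_nonneg.2 hinv1) (by ring)
  simp only [smul_eq_mul] at key
  have he : 1 / s * (b + s * (a - b)) + (1 - 1 / s) * b = a := by
    field_simp; ring
  rw [he] at key
  have hcb : h (b + s * (a - b)) ≤ M := hM _
  have hab : 0 < h a - h b := sub_pos.2 hlt
  have hsge : (M - h b) / (h a - h b) + 1 ≤ s := le_max_right _ _
  have h2 : M - h b < s * (h a - h b) := by
    have : (M - h b) / (h a - h b) < s := lt_of_lt_of_le (lt_add_of_pos_right _ one_pos) hsge
    calc M - h b = (M - h b) / (h a - h b) * (h a - h b) := by field_simp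
    _ < s * (h a - h b) := by exact mul_lt_mul_of_pos_right this hab
  have h3 : s * h a ≤ M + (s - 1) * h b := by
    have := mul_le_mul_of_nonneg_left key (le_of_lt hs0)
    have h4 : s * (1 / s * h (b + s * (a - b)) + (1 - 1 / s) * h b)
        = h (b + s * (a - b)) + (s - 1) * h b := by field_simp
    nlinarith
  nlinarith

/-- Let `X` be Tychonoff, `D ⊆ C_k(X)` open convex, `φ : D → ℝ` convex,
`f ∈ D`, `K ⊆ X` compact and `γ > 0` with `f + V_K^γ ⊆ D` and `φ` bounded above on
`f + V_K^γ`, where `V_K^γ = {h : h(K) ⊆ (−γ,γ)}`. If `f'` agrees with `f` on `K`,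
then `f' ∈ D` and `φ f' = φ f`. -/
theorem stmt3 {X : Type*} [TopologicalSpace X] [T35Space X]
    (D : Set C(X, ℝ)) (hDopen : IsOpen D) (hDconv : Convex ℝ D)
    (φ : C(X, ℝ) → ℝ) (hφconv : ConvexOn ℝ D φ)
    (f : C(X, ℝ)) (hf : f ∈ D)
    (K : Set X) (hK : IsCompact K) (γ : ℝ) (hγ : 0 < γ)
    (hsub : (fun h => f + h) '' {h : C(X, ℝ) | ∀ x ∈ K, |h x| < γ} ⊆ D)
    (hbdd : BddAbove (φ '' ((fun h => f + h) '' {h : C(X, ℝ) | ∀ x ∈ K, |h x| < γ})))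
    (f' : C(X, ℝ)) (hff' : ∀ x ∈ K, f' x = f x) :
    f' ∈ D ∧ φ f' = φ f := by
  set g : C(X, ℝ) := f' - f with hg
  have hline : ∀ t : ℝ, t • g ∈ {h : C(X, ℝ) | ∀ x ∈ K, |h x| < γ} := by
    intro t x hx
    have : g x = 0 := by simp [hg, hff' x hx]
    simp [this, hγ]
  have hlineD : ∀ t : ℝ, f + t • g ∈ D := fun t => hsub ⟨t • g, hline t, rfl⟩
  have hψ : ConvexOn ℝ Set.univ (fun t : ℝ => φ (f + t • g)) := by
    refine ⟨convex_univ, fun t1 _ t2 _ a b ha hb hab => ?_⟩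
    simp only [smul_eq_mul]
    have h1 : f + (a * t1 + b * t2) • g = a • (f + t1 • g) + b • (f + t2 • g) := by
      ext x
      simp only [ContinuousMap.add_apply, ContinuousMap.smul_apply, smul_eq_mul]
      linear_combination (-f x) * hab
    rw [h1]
    exact hφconv.2 (hlineD t1) (hlineD t2) ha hb hab
  obtain ⟨M, hM⟩ := hbdd
  have hMb : ∀ t : ℝ, φ (f + t • g) ≤ M := fun t =>
    hM ⟨f + t • g, ⟨t • g, hline t, rfl⟩, rfl⟩
  have hf1 : f + (1 : ℝ) • g = f' := by rw [one_smul, hg]; abel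
  have hf0 : f + (0 : ℝ) • g = f := by simp
  constructor
  · rw [← hf1]; exact hlineD 1
  · have h01 := convex_bddAbove_le hψ hMb 0 1
    have h10 := convex_bddAbove_le hψ hMb 1 0
    rw [hf0, hf1] at h01 h10
    exact le_antisymm h10 h01
end

section
/- Let E be a real Banach space, let D ⊆ E be a nonempty open convex set, and let f : D → ℝ be a continuous convex function. Then the (possibly empty) set of points of D at which f is Fréchet differentiable is a G_δ subset of D. -/
/-!
For a convex `f`, Fréchet differentiability at an interior point `x` is equivalent to
`f (x + h) + f (x - h) - 2 f x = o(‖h‖)`. One direction is immediate. Conversely, Hahn–Banach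
separation of the strict epigraph from `(x, f x)` gives a continuous subgradient `ξ` at `x`, and
`0 ≤ f (x + h) - f x - ξ h ≤ f (x + h) + f (x - h) - 2 f x`.

Along each ray the second difference is convex and vanishes at `0`, so a bound `ε t` for
`‖h‖ ≤ t` already gives `ε ‖h‖` for `‖h‖ ≤ t`: the `o(‖h‖)` condition only has to be checked at one
scale `t` for each `ε`. Local Lipschitz continuity of `f` makes such a one-scale bound stable
under moving `x`, so the points where it holds with `ε = 1/(n+1)` form a neighbourhood of each
point of differentiability. Their interiors `U n` are the required open sets.
-/

open Metric Set Filter Topology Asymptotics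

section NormedGroup

variable {E : Type*} [NormedAddCommGroup E] {D : Set E} {f : E → ℝ}

def secondDiff (f : E → ℝ) (x h : E) : ℝ := f (x + h) + f (x - h) - 2 * f x

def flatSet (f : E → ℝ) (D : Set E) (ε : ℝ) : Set E :=
  {y | ∃ t > 0, closedBall y t ⊆ D ∧ ∀ h, ‖h‖ ≤ t → secondDiff f y h ≤ ε * t}

lemma add_mem_and_sub_mem_of_closedBall_subset {s : Set E} {x h : E} {t : ℝ}
    (hs : closedBall x t ⊆ s) (hh : ‖h‖ ≤ t) : x + h ∈ s ∧ x - h ∈ s :=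
  ⟨hs (by simpa using hh), hs (by simpa using hh)⟩

lemma LipschitzOnWith.secondDiff_le_add {L : NNReal} {s : Set E} (hf : LipschitzOnWith L f s)
    {x y h : E} (hx : closedBall x ‖h‖ ⊆ s) (hy : closedBall y ‖h‖ ⊆ s) :
    secondDiff f y h ≤ secondDiff f x h + 4 * L * dist y x := by
  have hclose : ∀ a ∈ s, ∀ b ∈ s, dist a b = dist y x → |f a - f b| ≤ L * dist y x :=
    fun a ha b hb hab => hab ▸ Real.dist_eq (f a) (f b) ▸ hf.dist_le_mul a ha b hb
  obtain ⟨hx₁, hx₂⟩ := add_mem_and_sub_mem_of_closedBall_subset hx le_rfl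
  obtain ⟨hy₁, hy₂⟩ := add_mem_and_sub_mem_of_closedBall_subset hy le_rfl
  have hxs : x ∈ s := hx (mem_closedBall_self (norm_nonneg h))
  have hys : y ∈ s := hy (mem_closedBall_self (norm_nonneg h))
  have e₁ := abs_le.1 (hclose _ hy₁ _ hx₁ (dist_add_right y x h))
  have e₂ := abs_le.1 (hclose _ hy₂ _ hx₂ (dist_sub_right y x h))
  have e₃ := abs_le.1 (hclose _ hys _ hxs rfl)
  unfold secondDiff
  linarith [e₁.2, e₂.2, e₃.1]

lemma eventually_mem_flatSet {L : NNReal} {s : Set E} {x : E} (hLip : LipschitzOnWith L f s)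
    (hs : s ∈ 𝓝 x) (hsD : s ⊆ D) (hΔ : (fun h => secondDiff f x h) =o[𝓝 0] fun h => h)
    {ε : ℝ} (hε : 0 < ε) : ∀ᶠ y in 𝓝 x, y ∈ flatSet f D ε := by
  obtain ⟨ρ, hρ, hρs⟩ := Metric.mem_nhds_iff.1 hs
  obtain ⟨δ, hδ, hsmall⟩ := Metric.eventually_nhds_iff.1 (hΔ.def (half_pos hε))
  set t := min (δ / 2) (ρ / 2)
  have ht : 0 < t := by positivity
  have hperturb : Tendsto (fun y => 4 * L * dist y x) (𝓝 x) (𝓝 0) := by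
    simpa using
      ((continuous_id.dist (continuous_const (y := x))).tendsto x).const_mul (4 * (L : ℝ))
  filter_upwards [ball_mem_nhds x ht,
    hperturb.eventually (gt_mem_nhds (half_pos (mul_pos hε ht)))] with y hy hyL
  have htρ : t ≤ ρ / 2 := min_le_right _ _
  have hyt : closedBall y t ⊆ s :=
    (closedBall_subset_ball' (by rw [mem_ball] at hy; linarith)).trans hρs
  have hxt : closedBall x t ⊆ s := (closedBall_subset_ball (by linarith)).trans hρs
  refine ⟨t, ht, hyt.trans hsD, fun h hh => ?_⟩
  have hxh : secondDiff f x h ≤ ε / 2 * t := by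
    have hδh : dist h 0 < δ := by
      rw [dist_zero_right]
      linarith [min_le_left (δ / 2) (ρ / 2)]
    calc secondDiff f x h ≤ ‖secondDiff f x h‖ := le_abs_self _
      _ ≤ ε / 2 * ‖h‖ := by simpa using hsmall hδh
      _ ≤ ε / 2 * t := by gcongr
  have hyh := hLip.secondDiff_le_add ((closedBall_subset_closedBall hh).trans hxt)
    ((closedBall_subset_closedBall hh).trans hyt)
  linarith

end NormedGroup

section NormedSpace

variable {E : Type*} [NormedAddCommGroup E] [NormedSpace ℝ E] {D : Set E} {f : E → ℝ}

lemma HasFDerivAt.isLittleO_secondDiff {ξ : StrongDual ℝ E} {x : E} (hf : HasFDerivAt f ξ x) :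
    (fun h => secondDiff f x h) =o[𝓝 0] fun h => h := by
  have hpos := hasFDerivAt_iff_isLittleO_nhds_zero.1 hf
  have hneg : (fun h => f (x + -h) - f x - ξ (-h)) =o[𝓝 0] fun h => h :=
    isLittleO_neg_right.1 (hpos.comp_tendsto (show Tendsto (fun h : E => -h) (𝓝 0) (𝓝 0) by
      simpa using (continuous_neg.tendsto (0 : E))))
  refine (hpos.add hneg).congr_left fun h => ?_
  simp only [secondDiff, map_neg, ← sub_eq_add_neg]
  ring

lemma ConvexOn.sub_le_mul_sub (hf : ConvexOn ℝ D f) {x v : E} (hx : x ∈ D) (hv : x + v ∈ D)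
    {a : ℝ} (ha₀ : 0 ≤ a) (ha₁ : a ≤ 1) : f (x + a • v) - f x ≤ a * (f (x + v) - f x) := by
  have h := hf.2 hx hv (sub_nonneg.2 ha₁) ha₀ (sub_add_cancel 1 a)
  rw [show (1 - a) • x + a • (x + v) = x + a • v by module, smul_eq_mul, smul_eq_mul] at h
  linarith

lemma ConvexOn.secondDiff_nonneg (hf : ConvexOn ℝ D f) {x h : E} (h₁ : x + h ∈ D)
    (h₂ : x - h ∈ D) : 0 ≤ secondDiff f x h := by
  have hmid := hf.2 h₁ h₂ (by norm_num : (0 : ℝ) ≤ 1 / 2) (by norm_num : (0 : ℝ) ≤ 1 / 2)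
    (by norm_num)
  rw [show (1 / 2 : ℝ) • (x + h) + (1 / 2 : ℝ) • (x - h) = x by module, smul_eq_mul,
    smul_eq_mul] at hmid
  unfold secondDiff
  linarith

lemma ConvexOn.secondDiff_smul_le (hf : ConvexOn ℝ D f) {x v : E} (hx : x ∈ D)
    (h₁ : x + v ∈ D) (h₂ : x - v ∈ D) {a : ℝ} (ha₀ : 0 ≤ a) (ha₁ : a ≤ 1) :
    secondDiff f x (a • v) ≤ a * secondDiff f x v := by
  have hp := hf.sub_le_mul_sub hx h₁ ha₀ ha₁
  have hm := hf.sub_le_mul_sub hx (sub_eq_add_neg x v ▸ h₂) ha₀ ha₁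
  rw [smul_neg, ← sub_eq_add_neg, ← sub_eq_add_neg] at hm
  unfold secondDiff
  linarith

lemma ConvexOn.isLittleO_secondDiff_of_forall_mem_flatSet (hf : ConvexOn ℝ D f) {x : E} {ε : ℕ → ℝ}
    (hε : Tendsto ε atTop (𝓝 0)) (hx : ∀ n, x ∈ flatSet f D (ε n)) :
    (fun h => secondDiff f x h) =o[𝓝 0] fun h => h := by
  refine isLittleO_iff.2 fun c hc => ?_
  obtain ⟨n, hn⟩ := (hε.eventually (gt_mem_nhds hc)).exists
  obtain ⟨t, ht, hball, hbound⟩ := hx n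
  filter_upwards [closedBall_mem_nhds (0 : E) ht] with h hh
  rw [mem_closedBall_zero_iff] at hh
  set v := (t / ‖h‖) • h
  have hv : ‖v‖ ≤ t := by
    rcases eq_or_ne h 0 with rfl | h0
    · simpa [v] using ht.le
    · rw [norm_smul, Real.norm_of_nonneg (by positivity),
        div_mul_cancel₀ _ (norm_ne_zero_iff.2 h0)]
  have hvh : (‖h‖ / t) • v = h := by
    rcases eq_or_ne h 0 with rfl | h0
    · simp
    · have hinv : ‖h‖ / t * (t / ‖h‖) = 1 := by
        field_simp [norm_ne_zero_iff.2 h0]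
      rw [smul_smul, hinv, one_smul]
  obtain ⟨hv₁, hv₂⟩ := add_mem_and_sub_mem_of_closedBall_subset hball hv
  obtain ⟨hh₁, hh₂⟩ := add_mem_and_sub_mem_of_closedBall_subset hball hh
  have hscale := hf.secondDiff_smul_le (hball (mem_closedBall_self ht.le)) hv₁ hv₂
    (by positivity) (div_le_one_of_le₀ hh ht.le)
  rw [hvh] at hscale
  rw [Real.norm_eq_abs, abs_of_nonneg (hf.secondDiff_nonneg hh₁ hh₂)]
  calc secondDiff f x h ≤ ‖h‖ / t * (ε n * t) :=
        hscale.trans (mul_le_mul_of_nonneg_left (hbound v hv) (by positivity))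
    _ = ε n * ‖h‖ := by field_simp
    _ ≤ c * ‖h‖ := by gcongr

lemma ConvexOn.exists_subgradient (hD : IsOpen D) (hf : ConvexOn ℝ D f) (hc : ContinuousOn f D)
    {x : E} (hx : x ∈ D) : ∃ ξ : StrongDual ℝ E, ∀ y ∈ D, f x + ξ (y - x) ≤ f y := by
  set C := {p : E × ℝ | p.1 ∈ D ∧ f p.1 < p.2}
  have hCopen : IsOpen C :=
    ((hc.comp continuousOn_fst fun _ hp => hp).prodMk continuousOn_snd).isOpen_inter_preimage
      (hD.preimage continuous_fst) isOpen_lt_prod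
  obtain ⟨φ, hφ⟩ := geometric_hahn_banach_open_point hf.convex_strict_epigraph hCopen
    (x := (x, f x)) (by simp)
  have hφ_split : ∀ y s, φ (y, s) = φ (y, 0) + s * φ (0, 1) := by
    intro y s
    rw [← smul_eq_mul, ← map_smul, ← map_add]
    simp
  have hc0 : φ (0, 1) < 0 := by
    have := hφ (x, f x + 1) ⟨hx, lt_add_one _⟩
    rw [hφ_split, hφ_split x (f x)] at this
    linarith
  refine ⟨(-(φ (0, 1))⁻¹) • φ.comp (ContinuousLinearMap.inl ℝ E ℝ), fun y hy => ?_⟩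
  have hclosure : φ (y, f y) ≤ φ (x, f x) :=
    le_of_tendsto (x := 𝓝[>] f y)
      (((φ.continuous.comp (Continuous.prodMk_right y)).tendsto _).mono_left nhdsWithin_le_nhds)
      (eventually_nhdsWithin_of_forall fun s hs => (hφ (y, s) ⟨hy, hs⟩).le)
  rw [hφ_split, hφ_split x] at hclosure
  have hsub : φ (y - x, 0) = φ (y, 0) - φ (x, 0) := by
    rw [← map_sub, Prod.mk_sub_mk, sub_zero]
  simp only [smul_apply, ContinuousLinearMap.comp_apply, ContinuousLinearMap.inl_apply,
    smul_eq_mul, hsub]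
  have hslope : f x - f y ≤ (φ (y, 0) - φ (x, 0)) / φ (0, 1) := by
    rw [le_div_iff_of_neg hc0]
    linarith
  rw [neg_mul, ← div_eq_inv_mul]
  linarith

lemma hasFDerivAt_of_subgradient {ξ : StrongDual ℝ E} {x : E} (hD : D ∈ 𝓝 x)
    (hξ : ∀ y ∈ D, f x + ξ (y - x) ≤ f y)
    (hΔ : (fun h => secondDiff f x h) =o[𝓝 0] fun h => h) : HasFDerivAt f ξ x := by
  rw [hasFDerivAt_iff_isLittleO_nhds_zero]
  refine (IsBigO.of_bound 1 ?_).trans_isLittleO hΔ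
  have hadd : ∀ᶠ h in 𝓝 (0 : E), x + h ∈ D :=
    ((continuous_const_add x).tendsto' 0 x (add_zero x)).eventually hD
  have hsub : ∀ᶠ h in 𝓝 (0 : E), x - h ∈ D :=
    ((continuous_sub_left x).tendsto' 0 x (sub_zero x)).eventually hD
  filter_upwards [hadd, hsub] with h h₁ h₂
  have hlow := hξ _ h₁
  have hupp := hξ _ h₂
  simp only [add_sub_cancel_left, sub_sub_cancel_left, map_neg] at hlow hupp
  rw [one_mul, Real.norm_eq_abs, Real.norm_eq_abs, abs_of_nonneg (by linarith)]
  exact le_abs.2 (Or.inl (by unfold secondDiff; linarith))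

end NormedSpace

theorem stmt4_general {E : Type*} [NormedAddCommGroup E] [NormedSpace ℝ E]
    (D : Set E) (hDopen : IsOpen D)
    (f : E → ℝ) (hconv : ConvexOn ℝ D f) (hcont : ContinuousOn f D) :
    ∃ U : ℕ → Set E, (∀ n, IsOpen (U n)) ∧
      {x | x ∈ D ∧ DifferentiableAt ℝ f x} = D ∩ ⋂ n, U n := by
  refine ⟨fun n => interior (flatSet f D (1 / ((n : ℝ) + 1))), fun n => isOpen_interior, ?_⟩
  ext x
  simp only [mem_inter_iff, mem_iInter, mem_interior_iff_mem_nhds]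
  refine ⟨fun ⟨hx, hdiff⟩ => ⟨hx, fun n => ?_⟩, fun ⟨hx, hflat⟩ => ⟨hx, ?_⟩⟩
  · have hloc : LocallyLipschitzOn D f :=
      ((hconv.continuousOn_tfae hDopen ⟨x, hx⟩).out 1 0).1 hcont
    obtain ⟨L, s, hs, hLip⟩ := hloc hx
    rw [hDopen.nhdsWithin_eq hx] at hs
    exact eventually_mem_flatSet (hLip.mono inter_subset_left) (inter_mem hs (hDopen.mem_nhds hx))
      inter_subset_right hdiff.hasFDerivAt.isLittleO_secondDiff (by positivity)
  · obtain ⟨ξ, hξ⟩ := hconv.exists_subgradient hDopen hcont hx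
    exact (hasFDerivAt_of_subgradient (hDopen.mem_nhds hx) hξ
      (hconv.isLittleO_secondDiff_of_forall_mem_flatSet tendsto_one_div_add_atTop_nhds_zero_nat
        fun n => mem_of_mem_nhds (hflat n))).differentiableAt

/-- Let `E` be a real Banach space, `D ⊆ E` a nonempty open convex set
and `f : D → ℝ` a continuous convex function. Then the (possibly empty) set of points
of `D` at which `f` is Fréchet differentiable is a `G_δ` subset of `D`. -/
theorem stmt4 {E : Type*} [NormedAddCommGroup E] [NormedSpace ℝ E] [CompleteSpace E]
    (D : Set E) (hDopen : IsOpen D) (hDconv : Convex ℝ D) (hDne : D.Nonempty)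
    (f : E → ℝ) (hconv : ConvexOn ℝ D f) (hcont : ContinuousOn f D) :
    ∃ U : ℕ → Set E, (∀ n, IsOpen (U n)) ∧
      {x | x ∈ D ∧ DifferentiableAt ℝ f x} = D ∩ ⋂ n, U n :=
  stmt4_general D hDopen f hconv hcont
end

section
/- Let E be a real Banach space with closed unit ball B_E, let D ⊆ E be an open convex set, let f : D → ℝ be a convex continuous function, and let x ∈ D. Then f is Fréchet differentiable at x if and only if sup_{h ∈ B_E} (f(x + th) + f(x − th)) = 2 f(x) + o(t) as t ↓ 0 (t rational positive suffices). -/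
lemma exists_subgradient_aux {E : Type*} [NormedAddCommGroup E] [NormedSpace ℝ E]
    (D : Set E) (hDopen : IsOpen D)
    (f : E → ℝ) (hconv : ConvexOn ℝ D f) (hcont : ContinuousOn f D)
    (x : E) (hx : x ∈ D) :
    ∃ ξ : E →L[ℝ] ℝ, ∀ y ∈ D, f x + ξ (y - x) ≤ f y := by
  set S : Set (E × ℝ) := {p | p.1 ∈ D ∧ f p.1 < p.2} with hS
  have hSopen : IsOpen S := by
    have hg : ContinuousOn (fun p : E × ℝ => p.2 - f p.1) (D ×ˢ (Set.univ : Set ℝ)) := by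
      apply ContinuousOn.sub
      · exact continuous_snd.continuousOn
      · exact hcont.comp continuous_fst.continuousOn (fun p hp => hp.1)
    have h := hg.isOpen_inter_preimage (hDopen.prod isOpen_univ) (isOpen_Ioi (a := (0:ℝ)))
    convert h using 1
    ext p
    simp [hS, Set.mem_prod, sub_pos]
  have hSconv : Convex ℝ S := by
    rintro ⟨y₁, r₁⟩ ⟨hy₁, hr₁⟩ ⟨y₂, r₂⟩ ⟨hy₂, hr₂⟩ a b ha hb hab
    have h1 := hconv.2 hy₁ hy₂ ha hb hab
    refine ⟨hconv.1 hy₁ hy₂ ha hb hab, ?_⟩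
    show f (a • y₁ + b • y₂) < (a • ((y₁, r₁) : E × ℝ) + b • (y₂, r₂)).2
    simp only [Prod.smul_mk, Prod.mk_add_mk, smul_eq_mul] at *
    rcases ha.lt_or_eq with ha' | ha'
    · have hb2 : b * f y₂ ≤ b * r₂ := mul_le_mul_of_nonneg_left hr₂.le hb
      nlinarith
    · have hb1 : b = 1 := by linarith
      subst hb1
      rw [← ha'] at h1 ⊢
      simp only [zero_mul, zero_add, zero_smul] at *
      linarith
  have hxS : (x, f x) ∉ S := by simp [hS]
  obtain ⟨g, hg⟩ := geometric_hahn_banach_open_point hSconv hSopen hxS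
  set α : ℝ := g (0, 1) with hα
  have hgsplit : ∀ (y : E) (r : ℝ), g (y, r) = g (y, 0) + r * α := by
    intro y r
    have h : (y, r) = (y, (0:ℝ)) + r • ((0:E), (1:ℝ)) := by simp [Prod.ext_iff]
    rw [h, map_add, map_smul]
    simp [smul_eq_mul, hα]
  have hαneg : α < 0 := by
    have h1 : ((x, f x + 1) : E × ℝ) ∈ S := by simp [hS, hx]
    have h2 := hg _ h1
    rw [hgsplit x (f x + 1), hgsplit x (f x)] at h2
    nlinarith
  have hkey : ∀ y ∈ D, g (y, 0) + f y * α ≤ g (x, 0) + f x * α := by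
    intro y hy
    have h2 : ∀ ε > (0:ℝ), g (y, 0) + f y * α < g (x, 0) + f x * α + ε := by
      intro ε hε
      have hεα : 0 < ε / (-α) := div_pos hε (by linarith)
      have hmem : ((y, f y + ε / (-α)) : E × ℝ) ∈ S := by
        refine ⟨hy, ?_⟩
        show f y < f y + ε / (-α)
        linarith
      have h3 := hg _ hmem
      rw [hgsplit y _, hgsplit x _] at h3
      have hεa : ε / (-α) * α = -ε := by
        rw [div_neg, neg_mul, div_mul_cancel₀ ε hαneg.ne]
      have hsimp : (f y + ε / (-α)) * α = f y * α - ε := by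
        rw [add_mul, hεa]; ring
      rw [hsimp] at h3
      linarith
    exact le_of_forall_pos_lt_add h2
  refine ⟨(-α)⁻¹ • (g.comp (ContinuousLinearMap.inl ℝ E ℝ)), ?_⟩
  intro y hy
  have h3 := hkey y hy
  have h4 : g ((y - x, 0) : E × ℝ) = g (y, 0) - g (x, 0) := by
    have h : ((y - x, 0) : E × ℝ) = (y, 0) - (x, 0) := by simp [Prod.ext_iff]
    rw [h, map_sub]
  simp only [ContinuousLinearMap.smul_apply, ContinuousLinearMap.comp_apply,
    ContinuousLinearMap.inl_apply, smul_eq_mul, h4]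
  have hαpos : 0 < -α := by linarith
  have h5 : (-α)⁻¹ * (g (y, 0) - g (x, 0)) ≤ f y - f x := by
    rw [inv_mul_le_iff₀ hαpos]
    nlinarith
  linarith

/-- Let `E` be a real Banach space, `D ⊆ E` open convex, `f : D → ℝ`
convex continuous and `x ∈ D`. Then `f` is Fréchet differentiable at `x` if and only
if `sup_{‖h‖≤1} (f(x+th) + f(x−th)) = 2 f(x) + o(t)` as `t ↓ 0`.
(Since `h = 0` is allowed, the supremum is `≥ 2 f(x)`, hence the `o(t)` condition is
exactly the pointwise upper estimate below.) -/
theorem stmt8 {E : Type*} [NormedAddCommGroup E] [NormedSpace ℝ E] [CompleteSpace E]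
    (D : Set E) (hDopen : IsOpen D) (hDconv : Convex ℝ D)
    (f : E → ℝ) (hconv : ConvexOn ℝ D f) (hcont : ContinuousOn f D)
    (x : E) (hx : x ∈ D) :
    DifferentiableAt ℝ f x ↔
      ∀ ε > (0 : ℝ), ∃ δ > (0 : ℝ), ∀ t : ℝ, 0 < t → t < δ →
        ∀ h : E, ‖h‖ ≤ 1 → f (x + t • h) + f (x - t • h) - 2 * f x ≤ ε * t := by
  constructor
  · intro hdiff ε hε
    have hfd := hdiff.hasFDerivAt
    set ξ := fderiv ℝ f x with hξ
    rw [hasFDerivAt_iff_isLittleO_nhds_zero] at hfd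
    have h2 := (Asymptotics.isLittleO_iff.1 hfd) (show (0:ℝ) < ε / 2 by linarith)
    rw [Metric.eventually_nhds_iff] at h2
    obtain ⟨δ, hδ, hδ2⟩ := h2
    refine ⟨δ, hδ, fun t ht htδ h hh => ?_⟩
    have hn1 : ‖t • h‖ < δ := by
      rw [norm_smul, Real.norm_eq_abs, abs_of_pos ht]
      calc t * ‖h‖ ≤ t * 1 := by nlinarith
        _ < δ := by linarith
    have hn2 : ‖-(t • h)‖ < δ := by rwa [norm_neg]
    have e1 := hδ2 (show dist (t • h) 0 < δ by rwa [dist_zero_right])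
    have e2 := hδ2 (show dist (-(t • h)) 0 < δ by rwa [dist_zero_right])
    rw [Real.norm_eq_abs, abs_le] at e1 e2
    rw [map_neg] at e2
    have hts : x + -(t • h) = x - t • h := by abel
    rw [hts] at e2
    have hb1 : ‖t • h‖ ≤ t := by
      rw [norm_smul, Real.norm_eq_abs, abs_of_pos ht]; nlinarith
    have hb2 : ‖-(t • h)‖ ≤ t := by rwa [norm_neg]
    nlinarith [e1.2, e2.2, mul_le_mul_of_nonneg_left hb1 (le_of_lt (show (0:ℝ) < ε/2 by linarith)),
      mul_le_mul_of_nonneg_left hb2 (le_of_lt (show (0:ℝ) < ε/2 by linarith))]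
  · intro H
    obtain ⟨ξ, hξ⟩ := exists_subgradient_aux D hDopen f hconv hcont x hx
    have : HasFDerivAt f ξ x := by
      rw [hasFDerivAt_iff_isLittleO_nhds_zero, Asymptotics.isLittleO_iff]
      intro c hc
      obtain ⟨δ, hδ, Hc⟩ := H c hc
      obtain ⟨r, hr, hball⟩ := Metric.isOpen_iff.1 hDopen x hx
      have hmin : (0:ℝ) < min δ r := lt_min hδ hr
      filter_upwards [Metric.ball_mem_nhds (0:E) hmin] with v hv
      rcases eq_or_ne v 0 with rfl | hv0
      · simp
      rw [Metric.mem_ball, dist_zero_right] at hv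
      have htpos : 0 < ‖v‖ := norm_pos_iff.2 hv0
      have hxpv : x + v ∈ D := by
        apply hball
        rw [Metric.mem_ball, dist_eq_norm]
        simpa using lt_of_lt_of_le hv (min_le_right _ _)
      have hxmv : x - v ∈ D := by
        apply hball
        rw [Metric.mem_ball, dist_eq_norm]
        have : x - v - x = -v := by abel
        rw [this, norm_neg]
        exact lt_of_lt_of_le hv (min_le_right _ _)
      have key := Hc ‖v‖ htpos (lt_of_lt_of_le hv (min_le_left _ _)) (‖v‖⁻¹ • v)
        (by rw [norm_smul, norm_inv, norm_norm, inv_mul_cancel₀ htpos.ne']; )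
      rw [smul_inv_smul₀ htpos.ne'] at key
      have s1 := hξ (x + v) hxpv
      have s2 := hξ (x - v) hxmv
      have e1 : x + v - x = v := by abel
      have e2 : x - v - x = -v := by abel
      rw [e1] at s1
      rw [e2, map_neg] at s2
      rw [Real.norm_eq_abs, abs_le]
      constructor
      · have hnn : 0 ≤ c * ‖v‖ := mul_nonneg hc.le (norm_nonneg v)
        linarith
      · linarith
    exact this.differentiableAt
end

section
/- Let X be a Tychonoff (completely regular Hausdorff) space and let Y be a real Banach space. If there is an injective continuous linear map S : Y → C_k(X) that is a homeomorphism onto its image, then there exists a compact subset K ⊆ X such that Y embeds isomorphically into the Banach space C(K) (continuous real functions on K with the supremum norm), i.e., there is an injective continuous linear map from Y into C(K) that is a homeomorphism onto its image. -/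
open Topology

/-!
One bounded neighbourhood of `0` in `Y` already pins down a compact `K`: since `S` is an
embedding, the unit ball of `Y` contains `S⁻¹ {f | ∀ x ∈ K, |f x| < ε}` for some compact `K` and
`ε > 0`. Hence `y ↦ (S y)|_K` satisfies `‖(S y)|_K‖ < ε → ‖y‖ < 1`, and by homogeneity
`‖y‖ ≤ ε⁻¹ ‖(S y)|_K‖`, i.e. the restricted map is antilipschitz, so it is an isomorphic embedding
into `C(K)`.
-/

namespace ContinuousMap

variable {X : Type*} [TopologicalSpace X]

theorem hasBasis_nhds_zero_of_norm {E : Type*} [SeminormedAddCommGroup E] :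
    (𝓝 (0 : C(X, E))).HasBasis (fun p : Set X × ℝ => IsCompact p.1 ∧ 0 < p.2)
      (fun p => {f | ∀ x ∈ p.1, ‖f x‖ < p.2}) := by
  refine (nhds_basis_uniformity' (x := (0 : C(X, E)))
    (Metric.uniformity_basis_dist.compactConvergenceUniformity (α := X))).congr
    (fun _ => Iff.rfl) fun p _ => ?_
  ext f
  simp [UniformSpace.ball, dist_eq_norm']

def restrictL (R : Type*) {M : Type*} [Semiring R] [TopologicalSpace M] [AddCommMonoid M]
    [ContinuousAdd M] [Module R M] [ContinuousConstSMul R M] (K : Set X) :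
    C(X, M) →L[R] C(K, M) where
  toFun f := f.restrict K
  map_add' _ _ := rfl
  map_smul' _ _ := rfl
  cont := continuous_restrict K

end ContinuousMap

theorem LinearMap.norm_le_inv_mul_norm_of_norm_lt_imp {E F : Type*} [SeminormedAddCommGroup E]
    [NormedSpace ℝ E] [SeminormedAddCommGroup F] [NormedSpace ℝ F] (f : E →ₗ[ℝ] F) {ε : ℝ}
    (hε : 0 < ε) (h : ∀ y, ‖f y‖ < ε → ‖y‖ < 1) (y : E) : ‖y‖ ≤ ε⁻¹ * ‖f y‖ := by
  by_contra! hlt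
  have hy : 0 < ‖y‖ := (by positivity : 0 ≤ ε⁻¹ * ‖f y‖).trans_lt hlt
  have hfy : ‖f y‖ < ε * ‖y‖ := by rwa [inv_mul_lt_iff₀ hε] at hlt
  have hscaled : ‖f (‖y‖⁻¹ • y)‖ < ε := by
    rwa [map_smul, norm_smul, norm_inv, norm_norm, inv_mul_lt_iff₀ hy, mul_comm]
  have := h _ hscaled
  rw [norm_smul, norm_inv, norm_norm, inv_mul_cancel₀ hy.ne'] at this
  exact this.false

theorem stmt11_general {X : Type*} [TopologicalSpace X]
    {Y : Type*} [NormedAddCommGroup Y] [NormedSpace ℝ Y]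
    (S : Y →L[ℝ] C(X, ℝ)) (hSemb : IsEmbedding S) :
    ∃ K : Set X, IsCompact K ∧
      ∃ T : Y →L[ℝ] C(K, ℝ), Function.Injective T ∧ IsEmbedding T := by
  have hball : Metric.ball (0 : Y) 1 ∈ Filter.comap S (𝓝 0) := by
    rw [← map_zero S, ← hSemb.isInducing.nhds_eq_comap]
    exact Metric.ball_mem_nhds _ one_pos
  obtain ⟨V, hV, hVball⟩ := hball
  obtain ⟨⟨K, ε⟩, ⟨hK, hε⟩, hKV⟩ := ContinuousMap.hasBasis_nhds_zero_of_norm.mem_iff.mp hV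
  have : CompactSpace K := isCompact_iff_compactSpace.mp hK
  set T := ContinuousMap.restrictL ℝ K ∘L S
  have hT : ∀ y, ‖T y‖ < ε → ‖y‖ < 1 := fun y hy => by
    simpa using hVball (hKV fun x hx => ((T y).norm_coe_le_norm ⟨x, hx⟩).trans_lt hy)
  have hanti : AntilipschitzWith ⟨ε⁻¹, (inv_pos.mpr hε).le⟩ T :=
    T.antilipschitz_of_bound (T.toLinearMap.norm_le_inv_mul_norm_of_norm_lt_imp hε hT)
  exact ⟨K, hK, T, hanti.injective, (hanti.isUniformEmbedding T.uniformContinuous).isEmbedding⟩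

/-- Let `X` be Tychonoff and `Y` a real Banach space. If `Y` embeds
isomorphically into `C_k(X)` (an injective continuous linear map which is a
homeomorphism onto its image), then there is a compact `K ⊆ X` such that `Y` embeds
isomorphically into `C(K)`. -/
theorem stmt11 {X : Type*} [TopologicalSpace X] [T35Space X]
    {Y : Type*} [NormedAddCommGroup Y] [NormedSpace ℝ Y] [CompleteSpace Y]
    (S : Y →L[ℝ] C(X, ℝ)) (hSinj : Function.Injective S) (hSemb : IsEmbedding S) :
    ∃ K : Set X, IsCompact K ∧
      ∃ T : Y →L[ℝ] C(K, ℝ), Function.Injective T ∧ IsEmbedding T :=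
  stmt11_general S hSemb
end

section
/- Let X be a Tychonoff (completely regular Hausdorff) space and let P ⊆ X be a nonempty compact perfect set (P is closed in X and has no isolated points in its subspace topology). Then the function φ : C_k(X) → ℝ defined by φ(f) = max_{x∈P} f(x) is convex and continuous on C_k(X), and φ is Fréchet differentiable at no point of C_k(X). -/
/-!
Fréchet differentiability at `f` forces the symmetric second difference
`φ (f + t h) + φ (f - t h) - 2 φ f` to be `o(t)` uniformly for `h` in a neighbourhood `V` of `0`.
Every neighbourhood of `0` in `C_k(X)` contains all functions with `‖h‖_∞ < ε` for some `ε > 0`.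
For `φ f = max_P f`, take a maximiser `a ∈ P`; since `P` is perfect there is a point `b ≠ a`
of `P` with `f b > φ f - t ε / 4`, and complete regularity gives `0 ≤ h ≤ ε / 2` with
`h a = ε / 2`, `h b = 0`. Then `φ (f + t h) ≥ φ f + t ε / 2` and `φ (f - t h) ≥ f b`, so the
second difference is at least `t ε / 4`, which is not `o(t)`.
-/

/-- Fréchet differentiability of `φ` at a point `z` of a topological vector space:
`φ` is continuous at `z` and there are a continuous linear functional `ξ` and a
neighbourhood `V` of `0` such that `sup_{h∈V} (φ(z+th) − φ(z) − tξ(h)) = o(t)` as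
`t → 0`.  (Since `0 ∈ V`, the supremum is nonnegative, so the `o(t)` condition is
exactly the pointwise upper estimate below.) -/
def FrechetDiffAt {Z : Type*} [AddCommGroup Z] [Module ℝ Z] [TopologicalSpace Z]
    (φ : Z → ℝ) (z : Z) : Prop :=
  ContinuousAt φ z ∧ ∃ ξ : Z →L[ℝ] ℝ, ∃ V ∈ nhds (0 : Z),
    ∀ ε > (0 : ℝ), ∃ δ > (0 : ℝ), ∀ t : ℝ, |t| < δ →
      ∀ h ∈ V, φ (z + t • h) - φ z - t * ξ h ≤ ε * |t|

open Set Filter Topology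

theorem FrechetDiffAt.exists_nhds_add_add_neg_sub_le {Z : Type*} [AddCommGroup Z] [Module ℝ Z]
    [TopologicalSpace Z] {φ : Z → ℝ} {z : Z} (hφ : FrechetDiffAt φ z) :
    ∃ V ∈ 𝓝 (0 : Z), ∀ ε > (0 : ℝ), ∃ δ > (0 : ℝ), ∀ t : ℝ, 0 < t → t < δ → ∀ h ∈ V,
      φ (z + t • h) + φ (z + (-t) • h) - 2 * φ z ≤ ε * t := by
  obtain ⟨-, ξ, V, hV, hest⟩ := hφ
  refine ⟨V, hV, fun ε hε => ?_⟩
  obtain ⟨δ, hδ, hδest⟩ := hest (ε / 2) (half_pos hε)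
  refine ⟨δ, hδ, fun t ht htδ h hh => ?_⟩
  have hplus := hδest t (by rwa [abs_of_pos ht]) h hh
  have hminus := hδest (-t) (by rwa [abs_neg, abs_of_pos ht]) h hh
  rw [abs_of_pos ht] at hplus
  rw [abs_neg, abs_of_pos ht] at hminus
  linarith

section

variable {X : Type*} [TopologicalSpace X] {P : Set X}

theorem ContinuousMap.exists_pos_forall_abs_lt_mem_of_mem_nhds_zero {V : Set C(X, ℝ)}
    (hV : V ∈ 𝓝 0) : ∃ ε > (0 : ℝ), ∀ g : C(X, ℝ), (∀ x, |g x| < ε) → g ∈ V := by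
  obtain ⟨⟨K, W⟩, ⟨-, hW⟩, hKW⟩ := (nhds_basis_uniformity'
    (ContinuousMap.hasBasis_compactConvergenceUniformity (α := X) (β := ℝ))).mem_iff.mp hV
  obtain ⟨ε, hε, hεW⟩ := Metric.mem_uniformity_dist.mp hW
  refine ⟨ε, hε, fun g hg => hKW fun x _ => hεW ?_⟩
  simpa [Real.dist_eq] using hg x

theorem exists_continuousMap_eq_one_eq_zero [T35Space X] {a b : X} (hab : a ≠ b) :
    ∃ u : C(X, ℝ), u a = 1 ∧ u b = 0 ∧ ∀ x, 0 ≤ u x ∧ u x ≤ 1 := by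
  obtain ⟨v, hv, hva, hvb⟩ :=
    CompletelyRegularSpace.completely_regular a {b} isClosed_singleton hab
  refine ⟨⟨fun x => (unitInterval.symm (v x) : ℝ), by fun_prop⟩, ?_, ?_,
    fun x => (unitInterval.symm (v x)).2⟩
  · simp [hva]
  · simp [hvb rfl]

theorem exists_mem_inter_ne_of_forall_not_isolated
    (hP : ∀ a ∈ P, ¬ ∃ U : Set X, IsOpen U ∧ U ∩ P = {a}) {U : Set X} (hU : IsOpen U) {a : X}
    (haU : a ∈ U) (haP : a ∈ P) : ∃ b ∈ U ∩ P, b ≠ a := by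
  by_contra! h
  exact hP a haP ⟨U, hU, eq_singleton_iff_unique_mem.mpr ⟨⟨haU, haP⟩, h⟩⟩

theorem le_sSup_image_of_isCompact (hP : IsCompact P) (f : C(X, ℝ)) {x : X} (hx : x ∈ P) :
    f x ≤ sSup (f '' P) :=
  le_csSup (hP.image f.continuous).bddAbove (mem_image_of_mem f hx)

theorem exists_eq_sSup_image_of_isCompact (hP : IsCompact P) (hPne : P.Nonempty)
    (f : C(X, ℝ)) : ∃ x ∈ P, f x = sSup (f '' P) :=
  (hP.image f.continuous).sSup_mem (hPne.image f)

theorem convexOn_sSup_image (hP : IsCompact P) (hPne : P.Nonempty) :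
    ConvexOn ℝ univ (fun f : C(X, ℝ) => sSup (f '' P)) := by
  refine ⟨convex_univ, fun f _ g _ a b ha hb _ => csSup_le (hPne.image _) ?_⟩
  rintro - ⟨x, hx, rfl⟩
  simp only [ContinuousMap.add_apply, ContinuousMap.smul_apply, smul_eq_mul]
  gcongr <;> exact le_sSup_image_of_isCompact hP _ hx

theorem continuous_sSup_image (hP : IsCompact P) :
    Continuous (fun f : C(X, ℝ) => sSup (f '' P)) := by
  have : CompactSpace P := isCompact_iff_compactSpace.mp hP
  have hrestrict : Continuous fun g : C(P, ℝ) => sSup (g '' univ) :=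
    isCompact_univ.continuous_sSup continuous_eval
  convert hrestrict.comp (ContinuousMap.continuous_restrict P) using 2 with f
  rw [Function.comp_apply, image_univ, ContinuousMap.coe_restrict, range_domRestrict]

theorem exists_le_sSup_image_add_add_neg_sub [T35Space X] (hP : IsCompact P) (hPne : P.Nonempty)
    (hPperfect : ∀ a ∈ P, ¬ ∃ U : Set X, IsOpen U ∧ U ∩ P = {a}) (f : C(X, ℝ)) {c t : ℝ}
    (hc : 0 < c) (ht : 0 < t) :
    ∃ h : C(X, ℝ), (∀ x, |h x| ≤ c) ∧
      t * c / 2 ≤ sSup ((f + t • h) '' P) + sSup ((f + (-t) • h) '' P) - 2 * sSup (f '' P) := by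
  obtain ⟨a, haP, hfa⟩ := exists_eq_sSup_image_of_isCompact hP hPne f
  have hU : IsOpen {x | sSup (f '' P) - t * c / 2 < f x} :=
    isOpen_lt continuous_const f.continuous
  obtain ⟨b, ⟨hbU, hbP⟩, hba⟩ := exists_mem_inter_ne_of_forall_not_isolated hPperfect hU
    (show sSup (f '' P) - t * c / 2 < f a by rw [hfa]; linarith [mul_pos ht hc]) haP
  obtain ⟨u, hua, hub, hu⟩ := exists_continuousMap_eq_one_eq_zero hba.symm
  refine ⟨c • u, fun x => ?_, ?_⟩
  · rw [ContinuousMap.smul_apply, smul_eq_mul, abs_of_nonneg (mul_nonneg hc.le (hu x).1)]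
    exact mul_le_of_le_one_right hc.le (hu x).2
  · have hplus : f a + t * c ≤ sSup ((f + t • c • u) '' P) := by
      simpa [hua] using le_sSup_image_of_isCompact hP (f + t • c • u) haP
    have hminus : f b ≤ sSup ((f + (-t) • c • u) '' P) := by
      simpa [hub] using le_sSup_image_of_isCompact hP (f + (-t) • c • u) hbP
    have hb : sSup (f '' P) - t * c / 2 < f b := hbU
    linarith

theorem not_frechetDiffAt_sSup_image [T35Space X] (hP : IsCompact P) (hPne : P.Nonempty)
    (hPperfect : ∀ a ∈ P, ¬ ∃ U : Set X, IsOpen U ∧ U ∩ P = {a}) (f : C(X, ℝ)) :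
    ¬ FrechetDiffAt (fun g : C(X, ℝ) => sSup (g '' P)) f := by
  intro hφ
  obtain ⟨V, hV, hsecond⟩ := hφ.exists_nhds_add_add_neg_sub_le
  obtain ⟨ε, hε, hεV⟩ := ContinuousMap.exists_pos_forall_abs_lt_mem_of_mem_nhds_zero hV
  obtain ⟨δ, hδ, hδsecond⟩ := hsecond (ε / 8) (by positivity)
  obtain ⟨h, hsmall, hlarge⟩ :=
    exists_le_sSup_image_add_add_neg_sub hP hPne hPperfect f (half_pos hε) (half_pos hδ)
  have hhV : h ∈ V := hεV h fun x => (hsmall x).trans_lt (half_lt_self hε)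
  have hupper := hδsecond (δ / 2) (half_pos hδ) (half_lt_self hδ) h hhV
  nlinarith [mul_pos hε hδ]

end

theorem stmt15_general {X : Type*} [TopologicalSpace X] [T35Space X]
    (P : Set X) (hPne : P.Nonempty) (hPcomp : IsCompact P)
    (hPperfect : ∀ a ∈ P, ¬ ∃ U : Set X, IsOpen U ∧ U ∩ P = {a}) :
    ConvexOn ℝ Set.univ (fun f : C(X, ℝ) => sSup (f '' P)) ∧
    Continuous (fun f : C(X, ℝ) => sSup (f '' P)) ∧
    ∀ f : C(X, ℝ), ¬ FrechetDiffAt (fun g : C(X, ℝ) => sSup (g '' P)) f :=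
  ⟨convexOn_sSup_image hPcomp hPne, continuous_sSup_image hPcomp,
    not_frechetDiffAt_sSup_image hPcomp hPne hPperfect⟩

/-- Let `X` be Tychonoff and `P ⊆ X` a nonempty compact perfect set
(closed in `X`, with no isolated points in its subspace topology). Then
`φ(f) = max_{x∈P} f(x)` (here realised as `sSup (f '' P)`) is convex and continuous
on `C_k(X)`, and `φ` is Fréchet differentiable at no point of `C_k(X)`. -/
theorem stmt15 {X : Type*} [TopologicalSpace X] [T35Space X]
    (P : Set X) (hPne : P.Nonempty) (hPcomp : IsCompact P) (hPclosed : IsClosed P)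
    (hPperfect : ∀ a ∈ P, ¬ ∃ U : Set X, IsOpen U ∧ U ∩ P = {a}) :
    ConvexOn ℝ Set.univ (fun f : C(X, ℝ) => sSup (f '' P)) ∧
    Continuous (fun f : C(X, ℝ) => sSup (f '' P)) ∧
    ∀ f : C(X, ℝ), ¬ FrechetDiffAt (fun g : C(X, ℝ) => sSup (g '' P)) f :=
  stmt15_general P hPne hPcomp hPperfect
end

section
/- Let X be a Tychonoff (completely regular Hausdorff) ω-bounded space (the closure of every countable subset of X is compact). Then every compact subset of X is scattered if and only if X itself is scattered. -/
/-- A subset `S` of a topological space is scattered if every nonempty `A ⊆ S`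
has a point isolated in `A` (in the subspace topology). -/
def ScatteredSet {X : Type*} [TopologicalSpace X] (S : Set X) : Prop :=
  ∀ A ⊆ S, A.Nonempty → ∃ a ∈ A, ∃ U : Set X, IsOpen U ∧ U ∩ A = {a}

/-- A topological space is scattered if every nonempty subset `A` has a point
isolated in `A` (in the subspace topology). -/
def Scattered (X : Type*) [TopologicalSpace X] : Prop :=
  ∀ A : Set X, A.Nonempty → ∃ a ∈ A, ∃ U : Set X, IsOpen U ∧ U ∩ A = {a}

/-- Let `X` be a Tychonoff ω-bounded space (the closure of every
countable subset is compact). Then every compact subset of `X` is scattered if and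
only if `X` itself is scattered. -/
theorem stmt17 {X : Type*} [TopologicalSpace X] [T35Space X]
    (hωb : ∀ A : Set X, A.Countable → IsCompact (closure A)) :
    (∀ K : Set X, IsCompact K → ScatteredSet K) ↔ Scattered X := by
  constructor
  · intro h A hA
    by_contra hno
    push_neg at hno
    -- `A` is crowded: every point of `A` is a limit point of `A`.
    have crowd : ∀ a ∈ A, ∀ U : Set X, IsOpen U → a ∈ U → ∃ y, y ∈ U ∩ A ∧ y ≠ a := by
      intro a haA U hU haU
      by_contra hy
      push_neg at hy
      refine hno a haA U hU ?_
      apply Set.eq_singleton_iff_unique_mem.mpr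
      exact ⟨⟨haU, haA⟩, fun y hy' => hy y hy'⟩
    -- separation: two points of an open set can be separated by opens with
    -- disjoint closures inside the set
    have sep : ∀ (U : Set X), IsOpen U → ∀ x ∈ U, ∀ y ∈ U, x ≠ y →
        ∃ V W : Set X, IsOpen V ∧ IsOpen W ∧ x ∈ V ∧ y ∈ W ∧
          closure V ⊆ U ∧ closure W ⊆ U ∧ closure V ∩ closure W = ∅ := by
      intro U hU x hx y hy hxy
      obtain ⟨V, W, hV, hW, hxV, hyW, hd⟩ := t2_separation hxy
      obtain ⟨t, ht, htc, hts⟩ :=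
        exists_mem_nhds_isClosed_subset ((hU.inter hV).mem_nhds ⟨hx, hxV⟩)
      obtain ⟨t', ht', htc', hts'⟩ :=
        exists_mem_nhds_isClosed_subset ((hU.inter hW).mem_nhds ⟨hy, hyW⟩)
      have hct : closure (interior t) ⊆ U ∩ V :=
        (closure_mono interior_subset).trans (htc.closure_eq.subset.trans hts)
      have hct' : closure (interior t') ⊆ U ∩ W :=
        (closure_mono interior_subset).trans (htc'.closure_eq.subset.trans hts')
      refine ⟨interior t, interior t', isOpen_interior, isOpen_interior,
        mem_interior_iff_mem_nhds.mpr ht, mem_interior_iff_mem_nhds.mpr ht',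
        hct.trans Set.inter_subset_left, hct'.trans Set.inter_subset_left, ?_⟩
      apply Set.eq_empty_of_subset_empty
      intro z hz
      exact hd.le_bot ⟨(hct hz.1).2, (hct' hz.2).2⟩
    -- the branching step for the tree
    have step : ∀ p : {q : X × Set X // q.1 ∈ A ∧ q.1 ∈ q.2 ∧ IsOpen q.2},
        ∃ c : Bool → {q : X × Set X // q.1 ∈ A ∧ q.1 ∈ q.2 ∧ IsOpen q.2},
          (∀ i, (c i).1.2 ⊆ p.1.2) ∧
          closure (c false).1.2 ∩ closure (c true).1.2 = ∅ := by
      rintro ⟨⟨x, U⟩, hxA, hxU, hU⟩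
      obtain ⟨y, ⟨hyU, hyA⟩, hyx⟩ := crowd x hxA U hU hxU
      obtain ⟨V, W, hV, hW, hxV, hyW, hVc, hWc, hdisj⟩ := sep U hU x hxU y hyU (Ne.symm hyx)
      refine ⟨fun i => if i then ⟨(y, W), hyA, hyW, hW⟩ else ⟨(x, V), hxA, hxV, hV⟩, ?_, ?_⟩
      · intro i
        cases i
        · exact subset_closure.trans hVc
        · exact subset_closure.trans hWc
      · exact hdisj
    choose f hf1 hf2 using step
    obtain ⟨a, haA⟩ := hA
    let root : {q : X × Set X // q.1 ∈ A ∧ q.1 ∈ q.2 ∧ IsOpen q.2} :=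
      ⟨(a, Set.univ), haA, Set.mem_univ a, isOpen_univ⟩
    let node : List Bool → {q : X × Set X // q.1 ∈ A ∧ q.1 ∈ q.2 ∧ IsOpen q.2} :=
      fun s => s.foldr (fun i p => f p i) root
    let pt : List Bool → X := fun s => (node s).1.1
    let op : List Bool → Set X := fun s => (node s).1.2
    have hnode : ∀ s i, node (i :: s) = f (node s) i := fun s i => rfl
    have hptA : ∀ s, pt s ∈ A := fun s => (node s).2.1
    have hptop : ∀ s, pt s ∈ op s := fun s => (node s).2.2.1
    have hsub : ∀ s i, op (i :: s) ⊆ op s := by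
      intro s i
      have := hf1 (node s) i
      rw [← hnode s i] at this
      exact this
    have hdisj : ∀ s, closure (op (false :: s)) ∩ closure (op (true :: s)) = ∅ := by
      intro s
      have := hf2 (node s)
      rw [← hnode s false, ← hnode s true] at this
      exact this
    -- the compact set
    set D : Set X := Set.range pt with hD
    have hDc : D.Countable := Set.countable_range pt
    set K : Set X := closure D with hKdef
    have hKcomp : IsCompact K := hωb D hDc
    have hKcl : IsClosed K := isClosed_closure
    -- the family of closed subsets of K hitting every node
    set S : Set (Set X) :=
      {Q : Set X | Q ⊆ K ∧ IsClosed Q ∧ ∀ s, (Q ∩ closure (op s)).Nonempty} with hS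
    have hKS : K ∈ S := by
      refine ⟨le_refl _, hKcl, fun s => ?_⟩
      exact ⟨pt s, subset_closure ⟨s, rfl⟩, subset_closure (hptop s)⟩
    -- Zorn's lemma gives a minimal element of S
    obtain ⟨m, -, hmmin⟩ :
        ∃ m, m ⊆ K ∧ Minimal (· ∈ S) m := by
      apply zorn_superset_nonempty S ?_ K hKS
      intro c hcS hchain hcne
      refine ⟨⋂₀ c, ⟨?_, ?_, ?_⟩, fun s hs => Set.sInter_subset_of_mem hs⟩
      · obtain ⟨Q, hQ⟩ := hcne
        exact (Set.sInter_subset_of_mem hQ).trans (hcS hQ).1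
      · exact isClosed_sInter fun Q hQ => (hcS hQ).2.1
      · intro s
        haveI : Nonempty c := hcne.to_subtype
        have hne : (⋂ Q : c, ((Q : Set X) ∩ closure (op s))).Nonempty := by
          apply IsCompact.nonempty_iInter_of_directed_nonempty_isCompact_isClosed
          · intro Q R
            rcases hchain.total Q.2 R.2 with hle | hle
            · exact ⟨Q, le_refl _, Set.inter_subset_inter_left _ hle⟩
            · exact ⟨R, Set.inter_subset_inter_left _ hle, le_refl _⟩
          · exact fun Q => (hcS Q.2).2.2 s
          · exact fun Q => hKcomp.of_isClosed_subset
              ((hcS Q.2).2.1.inter isClosed_closure)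
              ((Set.inter_subset_left).trans (hcS Q.2).1)
          · exact fun Q => (hcS Q.2).2.1.inter isClosed_closure
        obtain ⟨z, hz⟩ := hne
        simp only [Set.mem_iInter] at hz
        exact ⟨z, Set.mem_sInter.mpr fun Q hQ => (hz ⟨Q, hQ⟩).1,
          (hz ⟨hcne.choose, hcne.choose_spec⟩).2⟩
    have hmS : m ∈ S := hmmin.prop
    -- m is nonempty; apply scatteredness of K to m
    have hmne : m.Nonempty := ((hmS.2.2 []).mono Set.inter_subset_left)
    obtain ⟨q, hqm, V, hV, hVm⟩ := h K hKcomp m hmS.1 hmne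
    have hqV : q ∈ V := by
      have : q ∈ V ∩ m := hVm ▸ rfl
      exact this.1
    -- m \ {q} is a smaller member of S, contradiction
    have hmq : m \ {q} = m ∩ Vᶜ := by
      ext z
      constructor
      · rintro ⟨hzm, hzq⟩
        refine ⟨hzm, fun hzV => hzq ?_⟩
        have : z ∈ V ∩ m := ⟨hzV, hzm⟩
        rw [hVm] at this
        exact this
      · rintro ⟨hzm, hzV⟩
        refine ⟨hzm, fun hzq => hzV ?_⟩
        rw [Set.mem_singleton_iff] at hzq
        rw [hzq]
        exact hqV
    have hm'S : m \ {q} ∈ S := by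
      refine ⟨(Set.diff_subset).trans hmS.1, ?_, ?_⟩
      · rw [hmq]
        exact hmS.2.1.inter (isClosed_compl_iff.mpr hV)
      · intro s
        obtain ⟨p0, hp0m, hp0⟩ := hmS.2.2 (false :: s)
        obtain ⟨p1, hp1m, hp1⟩ := hmS.2.2 (true :: s)
        have hne01 : p0 ≠ p1 := by
          intro he
          have : p0 ∈ closure (op (false :: s)) ∩ closure (op (true :: s)) :=
            ⟨hp0, he ▸ hp1⟩
          rw [hdisj s] at this
          exact this
        have hp0' : p0 ∈ closure (op s) := closure_mono (hsub s false) hp0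
        have hp1' : p1 ∈ closure (op s) := closure_mono (hsub s true) hp1
        by_cases hq0 : p0 = q
        · exact ⟨p1, ⟨hp1m, fun he => hne01 (by rw [hq0, Set.mem_singleton_iff.mp he])⟩, hp1'⟩
        · exact ⟨p0, ⟨hp0m, hq0⟩, hp0'⟩
    have := hmmin.le_of_le hm'S (Set.diff_subset)
    exact (this hqm).2 rfl
  · intro hs K _ B hBK hB
    exact hs B hB
end

section
/- Let X be a Tychonoff (completely regular Hausdorff) ω-bounded space (the closure of every countable subset of X is compact). Then the following are equivalent: (1) X is scattered; (2) every compact subset of X is scattered; (3) X is a Δ₁-space, i.e., for every decreasing sequence (D_n)_{n∈ℕ} of countable subsets of X with ⋂_n D_n = ∅ there is a decreasing sequence (V_n)_{n∈ℕ} of open subsets of X with D_n ⊆ V_n for each n and ⋂_n V_n = ∅. -/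
/-- A topological space `X` is a `Δ₁`-space if for every decreasing sequence
`(D_n)` of countable subsets of `X` with empty intersection there is a decreasing
sequence `(V_n)` of open sets with `D_n ⊆ V_n` for every `n` and with empty
intersection. -/
def Delta1Space (X : Type*) [TopologicalSpace X] : Prop :=
  ∀ D : ℕ → Set X, (∀ n, (D n).Countable) → (∀ n, D (n + 1) ⊆ D n) →
    (⋂ n, D n) = ∅ →
    ∃ V : ℕ → Set X, (∀ n, IsOpen (V n)) ∧ (∀ n, V (n + 1) ⊆ V n) ∧
      (∀ n, D n ⊆ V n) ∧ (⋂ n, V n) = ∅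

open Set

section MinimalPreimage

variable {X Y : Type*} [TopologicalSpace X] [TopologicalSpace Y] {f : X → Y} {K M : Set X}
  {P : Set Y}

theorem IsChain.image_sInter_eq [T2Space X] [T1Space Y] (hf : Continuous f) {c : Set (Set X)}
    (hchain : IsChain (· ⊆ ·) c) (hc : ∀ M ∈ c, IsCompact M ∧ f '' M = P) (hne : c.Nonempty) :
    f '' ⋂₀ c = P := by
  obtain ⟨M₀, hM₀⟩ := hne
  refine subset_antisymm ((hc M₀ hM₀).2 ▸ image_mono (sInter_subset_of_mem hM₀)) fun p hp ↦ ?_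
  -- Cantor's intersection theorem for the fibres over `p` of the members of the chain
  have : Nonempty c := ⟨⟨M₀, hM₀⟩⟩
  replace hchain : IsChain (· ⊇ ·) c := hchain.symm
  obtain ⟨x, hx⟩ := IsCompact.nonempty_iInter_of_directed_nonempty_isCompact_isClosed
    (fun M : c ↦ (M : Set X) ∩ f ⁻¹' {p})
    ((directedOn_iff_directed.mp hchain.directedOn).mono_comp (g := (· ∩ f ⁻¹' {p})) _
      fun _ _ ↦ inter_subset_inter_left _)
    (fun M ↦ by rw [← image_inter_nonempty_iff, (hc M M.2).2]; exact ⟨p, hp, rfl⟩)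
    (fun M ↦ (hc M M.2).1.inter_right (isClosed_singleton.preimage hf))
    (fun M ↦ (hc M M.2).1.isClosed.inter (isClosed_singleton.preimage hf))
  simp only [mem_iInter, mem_inter_iff, mem_preimage, mem_singleton_iff] at hx
  exact ⟨x, fun M hM ↦ (hx ⟨M, hM⟩).1, (hx ⟨M₀, hM₀⟩).2⟩

theorem exists_minimal_isCompact_image_eq [T2Space X] [T1Space Y] (hf : Continuous f)
    (hK : IsCompact K) (hP : IsClosed P) (hPK : P ⊆ f '' K) :
    ∃ M ⊆ K, Minimal (fun M ↦ IsCompact M ∧ f '' M = P) M := by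
  obtain ⟨M, hMK, hM⟩ := zorn_superset_nonempty {M | IsCompact M ∧ f '' M = P}
    (fun c hc hchain hne ↦ ⟨⋂₀ c, ⟨(hc hne.some_mem).1.of_isClosed_subset
      (isClosed_sInter fun M hM ↦ (hc hM).1.isClosed) (sInter_subset_of_mem hne.some_mem),
      hchain.image_sInter_eq hf hc hne⟩, fun _ ↦ sInter_subset_of_mem⟩)
    (K ∩ f ⁻¹' P)
    ⟨hK.inter_right (hP.preimage hf), by rw [image_inter_preimage, inter_eq_right.mpr hPK]⟩
  exact ⟨M, hMK.trans inter_subset_left, hM⟩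

theorem Minimal.exists_isOpen_inter_preimage_subset [T2Space Y] (hf : Continuous f)
    (hM : Minimal (fun M ↦ IsCompact M ∧ f '' M = P) M) {W : Set X} (hW : IsOpen W)
    (hWM : (W ∩ M).Nonempty) : ∃ O, IsOpen O ∧ (O ∩ P).Nonempty ∧ M ∩ f ⁻¹' O ⊆ W := by
  have hMW : IsCompact (M \ W) := hM.prop.1.diff hW
  refine ⟨(f '' (M \ W))ᶜ, (hMW.image hf).isClosed.isOpen_compl, ?_,
    fun x ⟨hxM, hxO⟩ ↦ by_contra fun hxW ↦ hxO ⟨x, ⟨hxM, hxW⟩, rfl⟩⟩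
  by_contra hPW
  have hPW : f '' (M \ W) = P :=
    (image_mono sdiff_subset).trans_eq hM.prop.2 |>.antisymm fun p hp ↦ by
      by_contra h; exact hPW ⟨p, h, hp⟩
  obtain ⟨x, hxW, hxM⟩ := hWM
  exact (hM.le_of_le ⟨hMW, hPW⟩ sdiff_subset hxM).2 hxW

theorem exists_perfect_minimal_of_not_countable_image [T2Space X] [T2Space Y]
    [SecondCountableTopology Y] (hf : Continuous f) (hK : IsCompact K)
    (hfK : ¬ (f '' K).Countable) :
    ∃ M ⊆ K, ∃ P : Set Y, Perfect P ∧ P.Nonempty ∧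
      Minimal (fun M ↦ IsCompact M ∧ f '' M = P) M := by
  obtain ⟨V, P, hV, hP, hVP⟩ := exists_countable_union_perfect_of_isClosed (hK.image hf).isClosed
  have hPne : P.Nonempty := nonempty_iff_ne_empty.mpr fun h ↦ hfK (by simpa [hVP, h] using hV)
  obtain ⟨M, hMK, hM⟩ :=
    exists_minimal_isCompact_image_eq hf hK hP.closed (hVP ▸ subset_union_right)
  exact ⟨M, hMK, P, hP, hPne, hM⟩

end MinimalPreimage

theorem Set.Countable.exists_antitone_finite_diff {α : Type*} {T : Set α} (hT : T.Countable) :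
    ∃ D : ℕ → Set α, Antitone D ∧ (∀ n, D n ⊆ T) ∧ (∀ n, (T \ D n).Finite) ∧ ⋂ n, D n = ∅ := by
  obtain ⟨ι, hι⟩ := countable_iff_exists_injOn.mp hT
  refine ⟨fun n ↦ {x ∈ T | n ≤ ι x}, fun m n hmn x hx ↦ ⟨hx.1, hmn.trans hx.2⟩,
    fun n ↦ sep_subset _ _, fun n ↦ ?_, ?_⟩
  · refine Finite.of_finite_image ((finite_Iio n).subset ?_) (hι.mono sdiff_subset)
    rintro _ ⟨x, ⟨hxT, hx⟩, rfl⟩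
    exact not_le.mp fun h ↦ hx ⟨hxT, h⟩
  · exact eq_empty_iff_forall_notMem.mpr fun x hx ↦
      (Nat.lt_succ_self (ι x)).not_ge (mem_iInter.mp hx (ι x + 1)).2

theorem Preperfect.inter_sdiff_finite_nonempty {Y : Type*} [TopologicalSpace Y] [T1Space Y]
    {P O F : Set Y} (hP : Preperfect P) (hO : IsOpen O) (hOP : (O ∩ P).Nonempty)
    (hF : F.Finite) : ((O \ F) ∩ P).Nonempty := by
  obtain ⟨q, hqO, hqP⟩ := hOP
  obtain ⟨y, ⟨⟨hyO, hyF⟩, hyP⟩, hyq⟩ := preperfect_iff_nhds.mp hP q hqP _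
    ((hO.sdiff (hF.sdiff (t := {q})).isClosed).mem_nhds ⟨hqO, fun h ↦ h.2 rfl⟩)
  exact ⟨y, ⟨hyO, fun h ↦ hyF ⟨h, hyq⟩⟩, hyP⟩

section CountableImage

variable {X Y : Type*} [TopologicalSpace X] [TopologicalSpace Y] [T2Space Y]
  [SecondCountableTopology Y] {f : X → Y} {K : Set X}

theorem ScatteredSet.countable_image [T2Space X] (hS : ScatteredSet K) (hK : IsCompact K)
    (hf : Continuous f) : (f '' K).Countable := by
  by_contra hfK
  obtain ⟨M, hMK, P, hP, hPne, hM⟩ := exists_perfect_minimal_of_not_countable_image hf hK hfK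
  obtain ⟨a, -, U, hU, hUM⟩ := hS M hMK (hM.prop.2 ▸ hPne).of_image
  obtain ⟨O, hO, ⟨q, hqO, hqP⟩, hMO⟩ :=
    hM.exists_isOpen_inter_preimage_subset hf hU ⟨a, hUM ▸ rfl⟩
  -- `f a` is the only point of `P` in `O`, against the perfectness of `P`
  have hOP : ∀ y ∈ O ∩ P, y = f a := by
    rintro y ⟨hyO, hyP⟩
    obtain ⟨x, hxM, rfl⟩ := hM.prop.2 ▸ hyP
    have hx : x ∈ U ∩ M := ⟨hMO ⟨hxM, hyO⟩, hxM⟩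
    rw [hUM, mem_singleton_iff] at hx
    rw [hx]
  obtain ⟨y, hy, hyq⟩ := preperfect_iff_nhds.mp hP.acc q hqP O (hO.mem_nhds hqO)
  exact hyq ((hOP y hy).trans (hOP q ⟨hqO, hqP⟩).symm)

theorem Minimal.exists_antitone_countable_dense {M : Set X} {P : Set Y} (hf : Continuous f)
    (hP : Perfect P) (hM : Minimal (fun M ↦ IsCompact M ∧ f '' M = P) M) :
    ∃ D : ℕ → Set X, Antitone D ∧ (∀ n, (D n).Countable) ∧ (∀ n, D n ⊆ M) ∧
      (∀ n, M ⊆ closure (D n)) ∧ ⋂ n, D n = ∅ := by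
  obtain ⟨S, hS, hSd⟩ := TopologicalSpace.exists_countable_dense P
  have hlift : ∀ p : P, ∃ x ∈ M, f x = p := fun p ↦ hM.prop.2 ▸ p.2
  choose g hgM hgf using hlift
  obtain ⟨D, hDa, hDT, hDf, hDe⟩ := (hS.image g).exists_antitone_finite_diff
  refine ⟨D, hDa, fun n ↦ (hS.image g).mono (hDT n), fun n ↦ (hDT n).trans
    (image_subset_iff.mpr fun p _ ↦ hgM p), fun n x hxM ↦ ?_, hDe⟩
  refine mem_closure_iff.mpr fun W hW hxW ↦ ?_
  obtain ⟨O, hO, hOP, hMO⟩ := hM.exists_isOpen_inter_preimage_subset hf hW ⟨x, hxW, hxM⟩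
  have hF : (f '' (g '' S \ D n)).Finite := (hDf n).image f
  obtain ⟨p, ⟨hpO, hpF⟩, hpS⟩ := hSd.inter_open_nonempty (Subtype.val ⁻¹' (O \ f '' (g '' S \ D n)))
    ((hO.sdiff hF.isClosed).preimage continuous_subtype_val)
    (by obtain ⟨y, hy, hyP⟩ := hP.acc.inter_sdiff_finite_nonempty hO hOP hF; exact ⟨⟨y, hyP⟩, hy⟩)
  have hgD : g p ∈ D n := by_contra fun h ↦ hpF ⟨g p, ⟨mem_image_of_mem g hpS, h⟩, hgf p⟩
  exact ⟨g p, hMO ⟨hgM p, by rwa [mem_preimage, hgf p]⟩, hgD⟩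

theorem Delta1Space.eq_empty_of_subset_closure [T2Space X] (hX : Delta1Space X) {M : Set X}
    (hM : IsCompact M) {D : ℕ → Set X} (hDa : Antitone D) (hD : ∀ n, (D n).Countable)
    (hDM : ∀ n, D n ⊆ M) (hMD : ∀ n, M ⊆ closure (D n)) (hDe : ⋂ n, D n = ∅) : M = ∅ := by
  obtain ⟨V, hVo, -, hDV, hVe⟩ := hX D hD (fun n ↦ hDa n.le_succ) hDe
  have : CompactSpace M := isCompact_iff_compactSpace.mp hM
  have hVd : ∀ n, Dense (((↑) : M → X) ⁻¹' V n) := fun n ↦ Subtype.dense_iff.mpr <| by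
    rw [Subtype.image_preimage_coe]
    exact (hMD n).trans (closure_mono (subset_inter (hDM n) (hDV n)))
  rw [← not_nonempty_iff_eq_empty, ← nonempty_coe_sort]
  intro
  -- Baire category theorem in the compact space `M`
  obtain ⟨x, hx⟩ :=
    (dense_iInter_of_isOpen (fun n ↦ (hVo n).preimage continuous_subtype_val) hVd).nonempty
  rw [← preimage_iInter, hVe] at hx
  exact hx

theorem Delta1Space.countable_image [T2Space X] (hX : Delta1Space X) (hK : IsCompact K)
    (hf : Continuous f) : (f '' K).Countable := by
  by_contra hfK
  obtain ⟨M, -, P, hP, hPne, hM⟩ := exists_perfect_minimal_of_not_countable_image hf hK hfK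
  obtain ⟨D, hDa, hD, hDM, hMD, hDe⟩ := hM.exists_antitone_countable_dense hf hP
  exact (hM.prop.2 ▸ hPne).of_image.ne_empty
    (hX.eq_empty_of_subset_closure hM.prop.1 hDa hD hDM hMD hDe)

end CountableImage

theorem exists_antitone_isOpen_superset_iInter_eq_empty {Y : Type*} [TopologicalSpace Y]
    [TopologicalSpace.PseudoMetrizableSpace Y] [T1Space Y] {E : ℕ → Set Y} (hE : Antitone E)
    (hE0 : (closure (E 0)).Countable) (hEe : ⋂ n, E n = ∅) :
    ∃ W : ℕ → Set Y, (∀ n, IsOpen (W n)) ∧ Antitone W ∧ (∀ n, E n ⊆ W n) ∧ ⋂ n, W n = ∅ := by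
  let := TopologicalSpace.pseudoMetrizableSpacePseudoMetric Y
  obtain ⟨C, hCa, -, hCf, hCe⟩ := hE0.exists_antitone_finite_diff
  -- the finite sets `F n` are disjoint from `E n` and exhaust `closure (E 0)`
  set F : ℕ → Set Y := fun n ↦ (closure (E 0) \ C n) \ E n
  set δ : ℕ → ℝ := fun n ↦ 1 / (n + 1)
  refine ⟨fun n ↦ Metric.thickening (δ n) (E n) \ F n,
    fun n ↦ Metric.isOpen_thickening.sdiff (hCf n).sdiff.isClosed, fun m n hmn ↦ ?_,
    fun n x hx ↦ ⟨Metric.self_subset_thickening (by positivity) _ hx, fun h ↦ h.2 hx⟩, ?_⟩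
  · refine sdiff_subset_sdiff ((Metric.thickening_mono ?_ _).trans
      (Metric.thickening_subset_of_subset _ (hE hmn)))
      (sdiff_subset_sdiff (sdiff_subset_sdiff_right (hCa hmn)) (hE hmn))
    exact Nat.one_div_le_one_div hmn
  refine eq_empty_iff_forall_notMem.mpr fun y hy ↦ ?_
  rw [mem_iInter] at hy
  have hyE : y ∈ closure (E 0) := by
    by_contra h
    obtain ⟨n, hn⟩ := (tendsto_one_div_add_atTop_nhds_zero_nat.eventually
      (Metric.eventually_notMem_thickening_of_infEDist_pos h)).exists
    exact hn (Metric.thickening_subset_of_subset _ (hE n.zero_le) (hy n).1)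
  obtain ⟨m, hm⟩ : ∃ m, y ∉ C m := by
    rw [← not_forall, ← mem_iInter, hCe]; exact notMem_empty y
  obtain ⟨k, hk⟩ : ∃ k, y ∉ E k := by
    rw [← not_forall, ← mem_iInter, hEe]; exact notMem_empty y
  exact (hy (max m k)).2
    ⟨⟨hyE, fun h ↦ hm (hCa (le_max_left m k) h)⟩, fun h ↦ hk (hE (le_max_right m k) h)⟩

theorem exists_continuous_injOn {X : Type*} [TopologicalSpace X] [T35Space X]
    (D : Set X) : ∃ f : X → (D × D → ℝ), Continuous f ∧ D.InjOn f := by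
  have hsep : ∀ p : D × D, ∃ g : X → ℝ, Continuous g ∧ ((p.1 : X) ≠ p.2 → g p.1 ≠ g p.2) := by
    intro p
    by_cases h : (p.1 : X) = p.2
    · exact ⟨0, continuous_const, absurd h⟩
    · obtain ⟨g, hg, hne⟩ := separatesPoints_continuous_of_t35Space h
      exact ⟨g, hg, fun _ ↦ hne⟩
  choose g hgc hg using hsep
  exact ⟨fun x p ↦ g p x, continuous_pi hgc,
    fun x hx y hy hxy ↦ by_contra fun h ↦ hg (⟨x, hx⟩, ⟨y, hy⟩) h (congrFun hxy _)⟩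

theorem Delta1Space.of_scatteredSet {X : Type*} [TopologicalSpace X] [T35Space X]
    (hωb : ∀ A : Set X, A.Countable → IsCompact (closure A))
    (hS : ∀ K : Set X, IsCompact K → ScatteredSet K) : Delta1Space X := by
  intro D hD hDs hDe
  have hDa : Antitone D := antitone_nat_of_succ_le hDs
  have := (hD 0).to_subtype
  obtain ⟨f, hf, hfD⟩ := exists_continuous_injOn (D 0)
  have hK := hωb _ (hD 0)
  have hfE : (closure (f '' D 0)).Countable := ((hS _ hK).countable_image hK hf).mono
    (closure_minimal (image_mono subset_closure) (hK.image hf).isClosed)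
  have hEe : ⋂ n, f '' D n = ∅ := by
    rw [← (hfD.mono (iUnion_subset fun n ↦ hDa n.zero_le)).image_iInter_eq, hDe, image_empty]
  obtain ⟨W, hWo, hWa, hDW, hWe⟩ :=
    exists_antitone_isOpen_superset_iInter_eq_empty (fun m n h ↦ image_mono (hDa h)) hfE hEe
  exact ⟨fun n ↦ f ⁻¹' W n, fun n ↦ (hWo n).preimage hf, fun n ↦ preimage_mono (hWa n.le_succ),
    fun n ↦ image_subset_iff.mp (hDW n), by rw [← preimage_iInter, hWe, preimage_empty]⟩

theorem exists_preperfect_of_not_scattered {X : Type*} [TopologicalSpace X] (h : ¬ Scattered X) :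
    ∃ A : Set X, A.Nonempty ∧ Preperfect A := by
  simp only [Scattered, not_forall, not_exists, not_and] at h
  obtain ⟨A, hAne, hA⟩ := h
  refine ⟨A, hAne, preperfect_iff_nhds.mpr fun a ha N hN ↦ ?_⟩
  obtain ⟨U, hUN, hU, haU⟩ := mem_nhds_iff.mp hN
  by_contra! hN
  exact hA a ha U hU (subset_antisymm (fun y hy ↦ hN y ⟨hUN hy.1, hy.2⟩)
    (singleton_subset_iff.mpr ⟨haU, ha⟩))

theorem Preperfect.exists_continuous_split {X : Type*} [TopologicalSpace X] [T35Space X]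
    {A U : Set X} (hA : Preperfect A) (hU : IsOpen U) (hUA : (U ∩ A).Nonempty) :
    ∃ g : X → ℝ, Continuous g ∧ (U ∩ g ⁻¹' Iio (1 / 3) ∩ A).Nonempty ∧
      (U ∩ g ⁻¹' Ioi (2 / 3) ∩ A).Nonempty := by
  obtain ⟨a, haU, haA⟩ := hUA
  obtain ⟨b, ⟨hbU, hbA⟩, hba⟩ := preperfect_iff_nhds.mp hA a haA U (hU.mem_nhds haU)
  obtain ⟨g, hg, hga, hgb⟩ :=
    CompletelyRegularSpace.completely_regular a {b} isClosed_singleton (Ne.symm hba)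
  refine ⟨fun x ↦ g x, continuous_subtype_val.comp hg, ⟨a, ⟨haU, ?_⟩, haA⟩, ⟨b, ⟨hbU, ?_⟩, hbA⟩⟩
  · simp [hga]
  · simp [hgb rfl]; norm_num

-- The address of a node lists its branch choices most recent first, as `PiNat.res` does.
def splitScheme {X : Type*} (g : Set X → X → ℝ) : List Bool → Set X
  | [] => univ
  | i :: s => splitScheme g s ∩ g (splitScheme g s) ⁻¹' (bif i then Ioi (2 / 3) else Iio (1 / 3))

theorem splitScheme_cons_subset {X : Type*} (g : Set X → X → ℝ) (i : Bool) (s : List Bool) :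
    splitScheme g (i :: s) ⊆ splitScheme g s :=
  inter_subset_left

section SplitScheme

variable {X : Type*} [TopologicalSpace X] {g : Set X → X → ℝ}

theorem isOpen_splitScheme (hg : ∀ U, Continuous (g U)) : ∀ s, IsOpen (splitScheme g s)
  | [] => isOpen_univ
  | i :: s => (isOpen_splitScheme hg s).inter <| (hg _).isOpen_preimage _ <| by
      cases i
      exacts [isOpen_Iio, isOpen_Ioi]

theorem splitScheme_inter_nonempty {A : Set X} (hg : ∀ U, Continuous (g U))
    (hgA : ∀ U, IsOpen U → (U ∩ A).Nonempty →
      (U ∩ g U ⁻¹' Iio (1 / 3) ∩ A).Nonempty ∧ (U ∩ g U ⁻¹' Ioi (2 / 3) ∩ A).Nonempty)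
    (hA : A.Nonempty) : ∀ s, (splitScheme g s ∩ A).Nonempty
  | [] => by simpa [splitScheme] using hA
  | i :: s => by
      have := hgA _ (isOpen_splitScheme hg s) (splitScheme_inter_nonempty hg hgA hA s)
      cases i
      exacts [this.1, this.2]

theorem splitScheme_apply_ne (hg : ∀ U, Continuous (g U)) {i j : Bool} (hij : i ≠ j)
    {s : List Bool} {x y : X} (hx : x ∈ closure (splitScheme g (i :: s)))
    (hy : y ∈ closure (splitScheme g (j :: s))) :
    g (splitScheme g s) x ≠ g (splitScheme g s) y := by
  have low : ∀ {z}, z ∈ closure (splitScheme g (false :: s)) → g (splitScheme g s) z ≤ 1 / 3 :=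
    fun hz ↦ closure_minimal (fun _ hw ↦ le_of_lt hw.2) (isClosed_le (hg _) continuous_const) hz
  have high : ∀ {z}, z ∈ closure (splitScheme g (true :: s)) → 2 / 3 ≤ g (splitScheme g s) z :=
    fun hz ↦ closure_minimal (fun _ hw ↦ le_of_lt hw.2) (isClosed_le continuous_const (hg _)) hz
  cases i <;> cases j
  · exact absurd rfl hij
  · linarith [low hx, high hy]
  · linarith [low hy, high hx]
  · exact absurd rfl hij

end SplitScheme

instance : Uncountable (ℕ → Bool) := by
  rw [← Cardinal.aleph0_lt_mk_iff]
  simpa using Cardinal.aleph0_lt_continuum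

theorem Preperfect.exists_isCompact_not_countable_image {X : Type*} [TopologicalSpace X]
    [T35Space X] (hωb : ∀ A : Set X, A.Countable → IsCompact (closure A)) {A : Set X}
    (hA : Preperfect A) (hAne : A.Nonempty) :
    ∃ K : Set X, IsCompact K ∧ ∃ f : X → (List Bool → ℝ), Continuous f ∧ ¬ (f '' K).Countable := by
  have hsplit : ∀ U : Set X, ∃ g : X → ℝ, Continuous g ∧ (IsOpen U → (U ∩ A).Nonempty →
      (U ∩ g ⁻¹' Iio (1 / 3) ∩ A).Nonempty ∧ (U ∩ g ⁻¹' Ioi (2 / 3) ∩ A).Nonempty) := by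
    intro U
    by_cases hU : IsOpen U ∧ (U ∩ A).Nonempty
    · obtain ⟨g, hgc, hg⟩ := hA.exists_continuous_split hU.1 hU.2
      exact ⟨g, hgc, fun _ _ ↦ hg⟩
    · exact ⟨0, continuous_const, fun h₁ h₂ ↦ absurd ⟨h₁, h₂⟩ hU⟩
  choose g hgc hgA using hsplit
  choose pt hpt using splitScheme_inter_nonempty hgc hgA hAne
  set K := closure (range pt)
  have hK : IsCompact K := hωb _ (countable_range pt)
  have hbranch : ∀ σ : ℕ → Bool,
      ∃ x, ∀ n, x ∈ K ∩ closure (splitScheme g (PiNat.res σ n)) := fun σ ↦ by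
    obtain ⟨x, hx⟩ := IsCompact.nonempty_iInter_of_sequence_nonempty_isCompact_isClosed
      (fun n ↦ K ∩ closure (splitScheme g (PiNat.res σ n)))
      (fun n ↦ inter_subset_inter_right _ (closure_mono (splitScheme_cons_subset g _ _)))
      (fun n ↦ ⟨pt _, subset_closure (mem_range_self _), subset_closure (hpt _).1⟩)
      (hK.inter_right isClosed_closure) (fun n ↦ isClosed_closure.inter isClosed_closure)
    exact ⟨x, mem_iInter.mp hx⟩
  choose x hx using hbranch
  let f : X → (List Bool → ℝ) := fun y s ↦ g (splitScheme g s) y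
  have hinj : Function.Injective (f ∘ x) := by
    intro σ τ h
    by_contra hστ
    set n := PiNat.firstDiff σ τ
    have hres : PiNat.res τ n = PiNat.res σ n :=
      PiNat.res_eq_res.mpr fun m hm ↦ (PiNat.apply_eq_of_lt_firstDiff hm).symm
    have hσ : x σ ∈ closure (splitScheme g (σ n :: PiNat.res σ n)) := (hx σ (n + 1)).2
    have hτ : x τ ∈ closure (splitScheme g (τ n :: PiNat.res σ n)) := hres ▸ (hx τ (n + 1)).2
    exact splitScheme_apply_ne hgc (PiNat.apply_firstDiff_ne hστ) hσ hτ (congrFun h _)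
  refine ⟨K, hK, f, continuous_pi fun s ↦ hgc _, fun hfK ↦ not_countable_univ (α := ℕ → Bool) ?_⟩
  exact MapsTo.countable_of_injOn (fun σ _ ↦ mem_image_of_mem f (hx σ 0).1) hinj.injOn hfK

theorem Delta1Space.scattered {X : Type*} [TopologicalSpace X] [T35Space X]
    (hωb : ∀ A : Set X, A.Countable → IsCompact (closure A)) (hX : Delta1Space X) :
    Scattered X := by
  by_contra h
  obtain ⟨A, hAne, hA⟩ := exists_preperfect_of_not_scattered h
  obtain ⟨K, hK, f, hf, hfK⟩ := hA.exists_isCompact_not_countable_image hωb hAne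
  exact hfK (hX.countable_image hK hf)

/-- Let `X` be a Tychonoff ω-bounded space (the closure of every
countable subset is compact). Then the following are equivalent: (1) `X` is
scattered; (2) every compact subset of `X` is scattered; (3) `X` is a `Δ₁`-space. -/
theorem stmt18 (X : Type*) [TopologicalSpace X] [T35Space X]
    (hωb : ∀ A : Set X, A.Countable → IsCompact (closure A)) :
    List.TFAE
      [ Scattered X,
        ∀ K : Set X, IsCompact K → ScatteredSet K,
        Delta1Space X ] := by
  tfae_have 1 → 2 := fun h K _ A _ hA ↦ h A hA
  tfae_have 2 → 3 := Delta1Space.of_scatteredSet hωb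
  tfae_have 3 → 1 := Delta1Space.scattered hωb
  tfae_finish
end
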